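/- arXiv:2511.15673 — 3 statements merged into one kernel-verified Lean document; each statement's English description precedes it below -/
import Mathlib

section
/- Let t₁ ≥ t₂ ≥ 1 be integers. Then there exists a tree T with bipartition class sizes t₁ and t₂ and maximum degree Δ(T) ≤ ⌈(t₁+t₂+1)/t₂⌉ ≤ t₁/t₂ + 2. -/
open SimpleGraph

/-- `G` has a bipartition of its vertex set into two independent classes, of sizes `a` and `b`. -/
def HasBipartition {V : Type*} (G : SimpleGraph V) (a b : ℕ) : Prop :=
  ∃ A : Set V, (∀ ⦃u v : V⦄, G.Adj u v → (u ∈ A ↔ v ∉ A)) ∧ A.ncard = a ∧ Aᶜ.ncard = b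

/-- The maximum degree of `G` is at most `d`. -/
def MaxDegLE {V : Type*} (G : SimpleGraph V) (d : ℝ) : Prop :=
  ∀ v : V, ((G.neighborSet v).ncard : ℝ) ≤ d

/-!
Write the classes as `a₀, …, a_{t₁-1}` and `b₀, …, b_{t₂-1}`. Hang every `a_j` on `b_{j mod t₂}`
and every `b_i` with `i > 0` on `a_{i-1}`. Since `t₂ ≤ t₁` this is a tree rooted at `b₀`, with `b_i`
at depth `2i` and `a_j` at depth `2 (j mod t₂) + 1`. Each `a_j` has degree at most `2`, while `b_i`
is adjacent to `a_{i-1}` and to the at most `⌊t₁/t₂⌋ + 1` vertices `a_j` with `j ≡ i (mod t₂)`;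
and `⌊t₁/t₂⌋ + 2 = ⌈(t₁+t₂+1)/t₂⌉`.
-/

namespace SimpleGraph

variable {V W : Type*}

lemma Iso.hasBipartition {G : SimpleGraph V} {G' : SimpleGraph W} (φ : G ≃g G') {a b : ℕ}
    (h : HasBipartition G a b) : HasBipartition G' a b := by
  obtain ⟨A, hA, ha, hb⟩ := h
  refine ⟨φ '' A, φ.surjective.forall₂.2 fun u v huv ↦ ?_, ?_, ?_⟩
  · simpa [φ.injective.mem_set_image] using hA (φ.map_adj_iff.1 huv)
  · rwa [Set.ncard_image_of_injective _ φ.injective]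
  · rwa [← Set.image_compl_eq φ.bijective, Set.ncard_image_of_injective _ φ.injective]

lemma Iso.maxDegLE {G : SimpleGraph V} {G' : SimpleGraph W} (φ : G ≃g G') {d : ℝ}
    (h : MaxDegLE G d) : MaxDegLE G' d :=
  φ.surjective.forall.2 fun v ↦ by
    rw [← φ.image_neighborSet, Set.ncard_image_of_injective _ φ.injective]
    exact h v

def parentGraph (f : V → V) : SimpleGraph V := fromRel fun u v ↦ f u = v

section parentGraph

variable {f : V → V}

@[simp]
lemma parentGraph_adj {u v : V} : (parentGraph f).Adj u v ↔ u ≠ v ∧ (f u = v ∨ f v = u) :=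
  fromRel_adj _ _ _

lemma neighborSet_parentGraph_subset (v : V) :
    (parentGraph f).neighborSet v ⊆ insert (f v) (f ⁻¹' {v} \ {v}) := by
  rintro u ⟨huv, hfv | hfu⟩
  · exact .inl hfv.symm
  · exact .inr ⟨hfu, huv.symm⟩

lemma ncard_neighborSet_parentGraph_le [Finite V] (v : V) :
    ((parentGraph f).neighborSet v).ncard ≤ (f ⁻¹' {v} \ {v}).ncard + 1 :=
  (Set.ncard_le_ncard (neighborSet_parentGraph_subset v)).trans (Set.ncard_insert_le _ _)

lemma hasBipartition_parentGraph {A : Set V} (hA : ∀ v, f v ≠ v → (v ∈ A ↔ f v ∉ A)) :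
    HasBipartition (parentGraph f) A.ncard Aᶜ.ncard := by
  refine ⟨A, ?_, rfl, rfl⟩
  rintro u v ⟨huv, rfl | rfl⟩
  · exact hA u (Ne.symm huv)
  · have := hA v huv
    tauto

variable {root : V} {m : V → ℕ}

lemma parentGraph_connected (hroot : ∀ v, f v = v → v = root)
    (hm : ∀ v, f v ≠ v → m (f v) < m v) : (parentGraph f).Connected := by
  have reach (v : V) : (parentGraph f).Reachable v root := by
    induction hv : m v using Nat.strong_induction_on generalizing v with
    | _ n ih =>
      by_cases hfv : f v = v
      · rw [hroot v hfv]
      · have hadj : (parentGraph f).Adj v (f v) := by simp [Ne.symm hfv]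
        exact hadj.reachable.trans (ih _ (hv ▸ hm v hfv) _ rfl)
  have : Nonempty V := ⟨root⟩
  exact ⟨fun u v ↦ (reach u).trans (reach v).symm⟩

lemma card_edgeSet_parentGraph [Finite V] (hroot : ∀ v, f v = v ↔ v = root)
    (hm : ∀ v, f v ≠ v → m (f v) < m v) :
    Nat.card (parentGraph f).edgeSet + 1 = Nat.card V := by
  have hne {v : V} : v ≠ root ↔ f v ≠ v := (hroot v).not.symm
  have hedges : (parentGraph f).edgeSet = (fun v ↦ s(v, f v)) '' {root}ᶜ := by
    ext ⟨u, v⟩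
    simp only [mem_edgeSet, parentGraph_adj, Set.mem_image, Set.mem_compl_singleton_iff, hne]
    constructor
    · rintro ⟨huv, rfl | rfl⟩
      · exact ⟨u, Ne.symm huv, rfl⟩
      · exact ⟨v, huv, Sym2.eq_swap⟩
    · rintro ⟨w, hw, hwuv⟩
      obtain ⟨rfl, rfl⟩ | ⟨rfl, rfl⟩ := Sym2.eq_iff.1 hwuv
      exacts [⟨hw.symm, .inl rfl⟩, ⟨hw, .inr rfl⟩]
  have hinj : Set.InjOn (fun v ↦ s(v, f v)) {root}ᶜ := by
    intro v hv w hw hvw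
    obtain ⟨hvw, -⟩ | ⟨hvw, hwv⟩ := Sym2.eq_iff.1 hvw
    · exact hvw
    · have hwv' := hm v (hne.1 hv)
      have hvw' := hm w (hne.1 hw)
      rw [hwv] at hwv'
      rw [← hvw] at hvw'
      exact absurd (hwv'.trans hvw') (lt_irrefl _)
  rw [Nat.card_coe_set_eq, hedges, hinj.ncard_image, ← Set.ncard_univ,
    ← Set.ncard_sdiff_singleton_add_one (Set.mem_univ root), Set.compl_eq_univ_sdiff]

lemma parentGraph_isTree [Finite V] (hroot : ∀ v, f v = v ↔ v = root)
    (hm : ∀ v, f v ≠ v → m (f v) < m v) : (parentGraph f).IsTree :=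
  isTree_iff_connected_and_card.2
    ⟨parentGraph_connected (fun v ↦ (hroot v).1) hm, card_edgeSet_parentGraph hroot hm⟩

end parentGraph

end SimpleGraph

lemma Fin.ncard_setOf_val_mod_eq_le (n r i : ℕ) :
    {j : Fin n | (j : ℕ) % r = i}.ncard ≤ n / r + 1 := by
  calc _ ≤ (Set.Iic (n / r)).ncard := by
        refine Set.ncard_le_ncard_of_injOn (fun j ↦ (j : ℕ) / r)
          (fun j _ ↦ Nat.div_le_div_right j.isLt.le) fun j hj k hk hjk ↦ Fin.ext ?_
        rw [← Nat.div_add_mod j r, ← Nat.div_add_mod k r, hj.out, hk.out]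
        exact congrArg (r * · + i) hjk
    _ = n / r + 1 := Set.ncard_Iic_nat _

lemma Int.ceil_natCast_add_add_one_div {K : Type*} [Field K] [LinearOrder K]
    [IsStrictOrderedRing K] [FloorRing K] (a b : ℕ) (hb : 0 < b) :
    ⌈((a : K) + b + 1) / b⌉ = (a / b : ℕ) + 2 := by
  have hbK : (0 : K) < b := Nat.cast_pos.2 hb
  have hlow : ((a / b : ℕ) : K) * b ≤ a := by exact_mod_cast Nat.div_mul_le_self a b
  have hup : (a : K) + 1 ≤ (a / b : ℕ) * b + b := by exact_mod_cast Nat.lt_div_mul_add hb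
  rw [Int.ceil_eq_iff, lt_div_iff₀ hbK, div_le_iff₀ hbK, Int.cast_add, Int.cast_natCast,
    Int.cast_ofNat]
  constructor <;> linarith

section Caterpillar

variable {t₁ t₂ : ℕ}

-- `Sum.inl j` is `a_j` and `Sum.inr i` is `b_i`.
def caterpillarParent (ht₂ : 0 < t₂) (ht : t₂ ≤ t₁) : Fin t₁ ⊕ Fin t₂ → Fin t₁ ⊕ Fin t₂
  | .inl j => .inr ⟨j % t₂, Nat.mod_lt _ ht₂⟩
  | .inr ⟨0, h⟩ => .inr ⟨0, h⟩
  | .inr ⟨i + 1, h⟩ => .inl ⟨i, by omega⟩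

def caterpillarDepth : Fin t₁ ⊕ Fin t₂ → ℕ
  | .inl j => 2 * (j % t₂) + 1
  | .inr i => 2 * i

variable (ht₂ : 0 < t₂) (ht : t₂ ≤ t₁)

lemma caterpillarParent_eq_self_iff (v : Fin t₁ ⊕ Fin t₂) :
    caterpillarParent ht₂ ht v = v ↔ v = .inr ⟨0, ht₂⟩ := by
  rcases v with j | ⟨_ | i, hi⟩ <;> simp [caterpillarParent]

lemma caterpillarDepth_parent_lt (v : Fin t₁ ⊕ Fin t₂) (hv : caterpillarParent ht₂ ht v ≠ v) :
    caterpillarDepth (caterpillarParent ht₂ ht v) < caterpillarDepth v := by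
  rcases v with j | ⟨_ | i, hi⟩
  · simp [caterpillarParent, caterpillarDepth]
  · exact absurd rfl hv
  · simp only [caterpillarParent, caterpillarDepth, Nat.mod_eq_of_lt (by omega : i < t₂)]
    omega

def caterpillar : SimpleGraph (Fin t₁ ⊕ Fin t₂) := parentGraph (caterpillarParent ht₂ ht)

lemma caterpillar_isTree : (caterpillar ht₂ ht).IsTree :=
  parentGraph_isTree (caterpillarParent_eq_self_iff ht₂ ht) (caterpillarDepth_parent_lt ht₂ ht)

lemma caterpillar_hasBipartition : HasBipartition (caterpillar ht₂ ht) t₁ t₂ := by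
  have hswap (v : Fin t₁ ⊕ Fin t₂) (_ : caterpillarParent ht₂ ht v ≠ v) :
      v ∈ Set.range Sum.inl ↔ caterpillarParent ht₂ ht v ∉ Set.range Sum.inl := by
    rcases v with j | ⟨_ | i, hi⟩ <;> simp_all [caterpillarParent]
  simpa [caterpillar, Set.compl_range_inl, Set.ncard_range_of_injective Sum.inl_injective,
    Set.ncard_range_of_injective Sum.inr_injective] using hasBipartition_parentGraph hswap

lemma ncard_neighborSet_caterpillar_le (v : Fin t₁ ⊕ Fin t₂) :
    ((caterpillar ht₂ ht).neighborSet v).ncard ≤ t₁ / t₂ + 2 := by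
  refine (ncard_neighborSet_parentGraph_le v).trans ?_
  rcases v with j | i
  · have : (caterpillarParent ht₂ ht ⁻¹' {.inl j} \ {.inl j}).ncard ≤ 1 := by
      rw [Set.ncard_le_one_iff_subsingleton]
      rintro (_ | ⟨_ | _, _⟩) ⟨hu, -⟩ (_ | ⟨_ | _, _⟩) ⟨hw, -⟩ <;>
        simp_all [caterpillarParent, Fin.ext_iff]
    exact (Nat.add_le_add_right this 1).trans (Nat.le_add_left 2 _)
  · have hsub : caterpillarParent ht₂ ht ⁻¹' {.inr i} \ {.inr i} ⊆
        Sum.inl '' {j : Fin t₁ | (j : ℕ) % t₂ = i} := by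
      rintro (j | ⟨_ | k, hk⟩) ⟨hu, hne⟩ <;> simp_all [caterpillarParent, Fin.ext_iff]
      exact ⟨j, hu, rfl⟩
    have := (Set.ncard_le_ncard hsub).trans
      ((Set.ncard_image_of_injective _ Sum.inl_injective).trans_le
        (Fin.ncard_setOf_val_mod_eq_le t₁ t₂ i))
    omega

end Caterpillar

theorem exists_tree_small_max_degree (t₁ t₂ : ℕ) (ht₂ : 1 ≤ t₂) (ht : t₂ ≤ t₁) :
    ∃ T : SimpleGraph (Fin (t₁ + t₂)), T.IsTree ∧ HasBipartition T t₁ t₂ ∧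
      MaxDegLE T ((⌈((t₁ : ℝ) + (t₂ : ℝ) + 1) / (t₂ : ℝ)⌉ : ℤ) : ℝ) ∧
      ((⌈((t₁ : ℝ) + (t₂ : ℝ) + 1) / (t₂ : ℝ)⌉ : ℤ) : ℝ) ≤ (t₁ : ℝ) / (t₂ : ℝ) + 2 := by
  let φ := Iso.map finSumFinEquiv (caterpillar ht₂ ht)
  rw [Int.ceil_natCast_add_add_one_div t₁ t₂ ht₂, Int.cast_add, Int.cast_natCast, Int.cast_ofNat]
  refine ⟨_, φ.isTree_iff.1 (caterpillar_isTree ht₂ ht),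
    φ.hasBipartition (caterpillar_hasBipartition ht₂ ht), φ.maxDegLE fun v ↦ ?_,
    by linarith [Nat.cast_div_le (α := ℝ) (m := t₁) (n := t₂)]⟩
  exact_mod_cast ncard_neighborSet_caterpillar_le ht₂ ht v
end

section
/- For every ξ ∈ (0, 1/100] there exists μ₀ > 0 such that for every μ ∈ (0, μ₀] there exists n₀ such that the following holds for all n ≥ n₀. Let H be a graph with at least n vertices such that δ(H) ≥ ξn and all but at most μn vertices v of H satisfy d(v) ≥ |H| − μn. Let T be an n-vertex tree with Δ(T) ≤ μn that contains at least 10μn pairwise vertex-disjoint bare paths of length 4. Then for every vertex t of T not lying on any of these bare paths and every vertex u of H, there is an embedding of T into H mapping t to u. -/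
open SimpleGraph

/-- `p` is a bare path of length 4 in `T`: five distinct vertices, consecutive ones adjacent,
whose three internal vertices have degree exactly 2 in `T`. -/
def IsBarePath4 {V : Type*} (T : SimpleGraph V) (p : Fin 5 → V) : Prop :=
  Function.Injective p ∧ (∀ i : Fin 4, T.Adj (p i.castSucc) (p i.succ)) ∧
    ∀ i : Fin 5, i ≠ 0 → i ≠ 4 → (T.neighborSet (p i)).ncard = 2

/-!
Put `b = ⌈μn⌉`, so that all but at most `b` vertices of `H` miss at most `b` vertices. First every
low-degree vertex `w` reserves two private neighbours. The tree minus the interiors of the bare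
paths is then embedded greedily in order of distance from `t`, avoiding the low-degree and the
reserved vertices; a vertex only has to be adjacent to the image of its parent, and only the
children of `t` have to fit into the possibly small neighbourhood of `u`. At least three vertices
of `H` per bare path are left over. Each low-degree vertex still unused becomes the middle vertex
of a bare path of its own, between its two reserved neighbours; a suitable path exists because
those neighbours miss at most `b` endpoints each. On the remaining paths the neighbours of the
endpoints are chosen greedily and the middle vertices by Hall's theorem: there are at least `4b`
such paths, every pair of chosen vertices has all but `2b` candidates as common neighbours, and
every candidate is a common neighbour of all but `2b` pairs.
-/

open Finset

theorem Set.InjOn.ite {α β : Type*} {s : Set α} {p : α → Prop} [DecidablePred p] {f g : α → β}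
    (hf : Set.InjOn f {x ∈ s | p x}) (hg : Set.InjOn g {x ∈ s | ¬p x})
    (hfg : ∀ x ∈ s, ∀ y ∈ s, p x → ¬p y → f x ≠ g y) :
    Set.InjOn (fun x => if p x then f x else g x) s := by
  intro x hx y hy hxy
  by_cases hpx : p x <;> by_cases hpy : p y <;> simp only [hpx, hpy, if_true, if_false] at hxy
  · exact hf ⟨hx, hpx⟩ ⟨hy, hpy⟩ hxy
  · exact absurd hxy (hfg x hx y hy hpx hpy)
  · exact absurd hxy.symm (hfg y hy x hx hpy hpx)
  · exact hg ⟨hx, hpx⟩ ⟨hy, hpy⟩ hxy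

theorem Function.injective_uncurry_of_disjoint {ι κ α : Type*} {P : ι → κ → α}
    (hP : ∀ i, Function.Injective (P i)) (hdisj : ∀ i j, i ≠ j → ∀ a b, P i a ≠ P j b) :
    Function.Injective (Function.uncurry P) := by
  rintro ⟨i, a⟩ ⟨j, b⟩ h
  by_cases hij : i = j
  · subst hij
    exact Prod.ext rfl (hP i h)
  · exact absurd h (hdisj i j hij a b)

namespace Finset

variable {ι α β : Type*} [DecidableEq β]

theorem exists_mem_notMem_union_image {X A : Finset β} {S : Finset α} (f : α → β)
    (h : #X + #S < #A) : ∃ v ∈ A, v ∉ X ∧ v ∉ f '' S := by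
  obtain ⟨v, hvA, hv⟩ := exists_mem_notMem_of_card_lt_card
    ((card_union_le X (S.image f)).trans_lt ((Nat.add_le_add_left card_image_le _).trans_lt h))
  simp only [mem_union, mem_image, not_or, not_exists, not_and] at hv
  exact ⟨v, hvA, hv.1, fun ⟨y, hy, hyv⟩ => hv.2 y hy hyv⟩

variable [Nonempty β] {s : Finset ι} {A : ι → Finset β}

theorem exists_injOn_mem_of_forall_card_le_card_biUnion
    (h : ∀ t ⊆ s, #t ≤ #(t.biUnion A)) : ∃ f : ι → β, Set.InjOn f s ∧ ∀ i ∈ s, f i ∈ A i := by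
  classical
  obtain ⟨g, hg, hgA⟩ := (all_card_le_biUnion_card_iff_exists_injective fun i : s => A i).1
    fun t => by
      have := h (t.image Subtype.val) fun i hi => by obtain ⟨j, -, rfl⟩ := mem_image.1 hi; exact j.2
      rwa [image_biUnion, card_image_of_injective _ Subtype.val_injective] at this
  refine ⟨fun i => if hi : i ∈ s then g ⟨i, hi⟩ else Classical.arbitrary β, ?_, ?_⟩
  · intro i hi j hj hij
    simp only [dif_pos (mem_coe.1 hi), dif_pos (mem_coe.1 hj)] at hij
    exact congrArg Subtype.val (hg hij)
  · intro i hi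
    simpa [dif_pos hi] using hgA ⟨i, hi⟩

theorem exists_injOn_mem_of_card_le (h : ∀ i ∈ s, #s ≤ #(A i)) :
    ∃ f : ι → β, Set.InjOn f s ∧ ∀ i ∈ s, f i ∈ A i := by
  refine exists_injOn_mem_of_forall_card_le_card_biUnion fun t hts => ?_
  obtain rfl | ⟨i, hi⟩ := t.eq_empty_or_nonempty
  · simp
  · exact (card_le_card hts).trans <| (h i (hts hi)).trans <|
      card_le_card <| subset_biUnion_of_mem A hi

theorem exists_injOn_mem_of_card_le_add {L : Finset β} {m : ℕ} (hsL : #s ≤ #L) (hs : 2 * m ≤ #s)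
    (hA : ∀ i ∈ s, #L ≤ #(A i) + m) (hL : ∀ v ∈ L, #{i ∈ s | v ∉ A i} ≤ m) :
    ∃ f : ι → β, Set.InjOn f s ∧ ∀ i ∈ s, f i ∈ A i := by
  refine exists_injOn_mem_of_forall_card_le_card_biUnion fun t hts => ?_
  by_cases hsmall : #t + m ≤ #L
  · obtain rfl | ⟨i, hi⟩ := t.eq_empty_or_nonempty
    · simp
    · have := card_le_card (subset_biUnion_of_mem A hi)
      have := hA i (hts hi)
      omega
  -- a large `t` leaves no vertex of `L` uncovered
  have hcover : L ⊆ t.biUnion A := by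
    intro v hv
    by_contra hvt
    have : t ⊆ {i ∈ s | v ∉ A i} := fun i hi =>
      mem_filter.2 ⟨hts hi, fun hvi => hvt (mem_biUnion.2 ⟨i, hi, hvi⟩)⟩
    have := card_le_card this
    have := hL v hv
    omega
  exact (card_le_card hts).trans <| hsL.trans <| card_le_card hcover

end Finset

abbrev innerSlots : Finset (Fin 5) := {1, 2, 3}

abbrev nearEndSlots : Finset (Fin 5) := {1, 3}

section WithMiddle

variable {ι V : Type*}

def withMiddle (c : ι × Fin 5 → V) (m : ι → V) (q : ι × Fin 5) : V :=
  if q.2 = 2 then m q.1 else c q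

theorem withMiddle_injOn [DecidableEq V] {J : Finset ι} {c : ι × Fin 5 → V} {m : ι → V}
    (hc : Set.InjOn c ↑(J ×ˢ nearEndSlots)) (hm : Set.InjOn m J)
    (hmc : ∀ i ∈ J, m i ∉ (J ×ˢ nearEndSlots).image c) :
    Set.InjOn (withMiddle c m) ↑(J ×ˢ innerSlots) := by
  refine Set.InjOn.ite ?_ (hc.mono fun q ⟨hq, hq2⟩ => ?_) fun q hq q' hq' _ hq'2 h => ?_
  · rintro ⟨i, j⟩ ⟨hi, rfl⟩ ⟨i', j'⟩ ⟨hi', rfl⟩ h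
    simp only [mem_coe, mem_product] at hi hi'
    simp [hm hi.1 hi'.1 h]
  · simp only [coe_product, Set.mem_prod, mem_coe, innerSlots, mem_insert, mem_singleton] at hq ⊢
    tauto
  · refine hmc q.1 (mem_product.1 hq).1 (mem_image.2 ⟨q', ?_, h.symm⟩)
    simp only [coe_product, Set.mem_prod, mem_coe, innerSlots, mem_insert, mem_singleton] at hq'
    simp only [mem_product, mem_insert, mem_singleton]
    tauto

theorem withMiddle_mem {J : Finset ι} {c : ι × Fin 5 → V} {m : ι → V} {s : Finset V}
    (hc : ∀ q ∈ J ×ˢ nearEndSlots, c q ∈ s) (hm : ∀ i ∈ J, m i ∈ s) :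
    ∀ q ∈ J ×ˢ innerSlots, withMiddle c m q ∈ s := by
  intro q hq
  simp only [mem_product, innerSlots, mem_insert, mem_singleton] at hq
  unfold withMiddle
  split_ifs
  · exact hm q.1 hq.1
  · exact hc q (by simp only [mem_product, mem_insert, mem_singleton]; tauto)

end WithMiddle

namespace SimpleGraph

theorem ncard_neighborSet_eq_degree {V : Type*} (G : SimpleGraph V) (v : V)
    [Fintype (G.neighborSet v)] : (G.neighborSet v).ncard = G.degree v := by
  rw [← card_neighborFinset_eq_degree, ← Set.ncard_coe_finset, coe_neighborFinset]

theorem adj_of_pathGraph_adj {V : Type*} {G : SimpleGraph V} {n : ℕ} {p : Fin (n + 1) → V}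
    (hp : ∀ i : Fin n, G.Adj (p i.castSucc) (p i.succ)) {j j' : Fin (n + 1)}
    (h : (pathGraph (n + 1)).Adj j j') : G.Adj (p j) (p j') := by
  rcases pathGraph_adj.1 h with h | h
  · convert hp ⟨j, by omega⟩ using 2 <;> ext <;> simp [h]
  · convert (hp ⟨j', by omega⟩).symm using 2 <;> ext <;> simp [h]

section MissesAtMost

variable {V ι : Type*} [Fintype V] (H : SimpleGraph V) [DecidableRel H.Adj]

/-- All but at most `b` vertices of `H` are neighbours of `v`; `v` itself counts among the `b`. -/
def MissesAtMost (b : ℕ) (v : V) : Prop :=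
  Fintype.card V ≤ H.degree v + b

variable {H} {b : ℕ} {v : V}

theorem MissesAtMost.card_filter_not_adj_le (hv : H.MissesAtMost b v) {s : Finset ι}
    {g : ι → V} (hg : Set.InjOn g s) : #{i ∈ s | ¬H.Adj v (g i)} ≤ b := by
  have hsplit := card_filter_add_card_filter_not (s := (univ : Finset V)) (H.Adj v)
  rw [← neighborFinset_eq_filter, card_neighborFinset_eq_degree, card_univ] at hsplit
  calc #{i ∈ s | ¬H.Adj v (g i)} ≤ #({w | ¬H.Adj v w} : Finset V) :=
        card_le_card_of_injOn g (fun i hi => by simp_all) (hg.mono fun i hi => (mem_filter.1 hi).1)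
    _ ≤ b := by unfold MissesAtMost at hv; omega

theorem MissesAtMost.card_le_card_filter_adj_add (hv : H.MissesAtMost b v) (S : Finset V) :
    #S ≤ #{w ∈ S | H.Adj v w} + b := by
  have h₁ := card_filter_add_card_filter_not (s := S) fun w => H.Adj v w
  have h₂ := hv.card_filter_not_adj_le (s := S) (Set.injOn_id _)
  simp only [id] at h₂
  omega

end MissesAtMost

section Tree

variable {α : Type*} {T : SimpleGraph α}

theorem IsTree.eq_of_adj_of_dist_le (hT : T.IsTree) (t : α) {x y z : α} (hy : T.Adj x y)
    (hz : T.Adj x z) (hyd : T.dist t y ≤ T.dist t x) (hzd : T.dist t z ≤ T.dist t x) : y = z := by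
  obtain ⟨p, hp, -⟩ := hT.connected.exists_path_of_dist t x
  -- a neighbour of `x` that is not farther from `t` lies on the path from `t` to `x`
  have key : ∀ w, T.Adj x w → T.dist t w ≤ T.dist t x → w = p.penultimate := by
    intro w hw hwd
    classical
    obtain ⟨q, hq, hql⟩ := hT.connected.exists_path_of_dist t w
    have hxq : x ∉ q.support := fun hx => by
      have := q.length_takeUntil_lt_length hx hw.ne
      have := dist_le (q.takeUntil x hx)
      omega
    exact hT.isAcyclic.eq_penultimate_of_adj_end hp hw
      (hT.isAcyclic.mem_support_of_ne_mem_support_of_adj_of_isPath hp hq hw hxq)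
  rw [key y hy hyd, key z hz hzd]

theorem Connected.card_le_degree_of_forall_dist_le [Fintype α] [DecidableEq α]
    [DecidableRel T.Adj] (hT : T.Connected) {t x : α} {s : Finset α} (hx : T.Adj t x)
    (hxs : x ∉ s) (hs : ∀ y ∈ s, T.dist t y ≤ T.dist t x) : #s ≤ T.degree t := by
  have hsub : s ⊆ (insert t (T.neighborFinset t)).erase x := by
    intro y hy
    refine mem_erase.2 ⟨ne_of_mem_of_not_mem hy hxs, ?_⟩
    have := hs y hy
    rw [dist_eq_one_iff_adj.2 hx] at this
    rcases Nat.le_one_iff_eq_zero_or_eq_one.1 this with h | h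
    · rw [hT.dist_eq_zero_iff] at h
      simp [h]
    · rw [dist_eq_one_iff_adj] at h
      simp [h]
  have := card_le_card hsub
  rw [card_erase_of_mem (mem_insert_of_mem ((mem_neighborFinset _ _ _).2 hx)),
    card_insert_of_notMem (by simp), card_neighborFinset_eq_degree] at this
  omega

end Tree

section PartialEmbedding

variable {α V : Type*} {T : SimpleGraph α} {H : SimpleGraph V}

def IsPartialEmbedding (T : SimpleGraph α) (H : SimpleGraph V) (S : Set α) (f : α → V) : Prop :=
  Set.InjOn f S ∧ ∀ ⦃x⦄, x ∈ S → ∀ ⦃y⦄, y ∈ S → T.Adj x y → H.Adj (f x) (f y)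

theorem IsPartialEmbedding.update_insert [DecidableEq α] {S : Set α} {f : α → V} {x : α} {v : V}
    (hf : IsPartialEmbedding T H S f) (hx : x ∉ S) (hv : v ∉ f '' S)
    (hadj : ∀ y ∈ S, T.Adj x y → H.Adj v (f y)) :
    IsPartialEmbedding T H (insert x S) (Function.update f x v) := by
  have hS : Set.EqOn (Function.update f x v) f S := fun y hy =>
    Function.update_of_ne (ne_of_mem_of_not_mem hy hx) _ _
  refine ⟨(Set.injOn_insert hx).2 ⟨hf.1.congr hS.symm, ?_⟩, ?_⟩
  · rwa [Function.update_self, hS.image_eq]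
  rintro y (rfl | hy) z (rfl | hz) hyz
  · exact absurd hyz T.irrefl
  · rw [Function.update_self, hS hz]
    exact hadj z hz hyz
  · rw [Function.update_self, hS hy]
    exact (hadj y hy hyz.symm).symm
  · rw [hS hy, hS hz]
    exact hf.2 hy hz hyz

variable [Fintype α] [DecidableEq α] [DecidableRel T.Adj] [Fintype V] [DecidableEq V]
  [DecidableRel H.Adj]

theorem IsTree.exists_fresh_image (hT : T.IsTree) {t x : α} {u : V} {X : Finset V}
    {D : Finset α} {f : α → V} (hf : IsPartialEmbedding T H D f) (htD : t ∈ D) (hft : f t = u)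
    (hfX : ∀ y ∈ D, y ≠ t → f y ∉ X) (hxD : x ∉ D) (hx : ∀ y ∈ D, T.dist t y ≤ T.dist t x)
    (hu : #X + T.degree t + 1 ≤ H.degree u) (hdeg : ∀ v ∉ X, v ≠ u → #X + #D < H.degree v)
    (hV : #X + #D < Fintype.card V) :
    ∃ v, v ∉ X ∧ v ∉ f '' D ∧ ∀ y ∈ D, T.Adj x y → H.Adj v (f y) := by
  by_cases hp : ∃ p ∈ D, T.Adj x p
  · obtain ⟨p, hpD, hxp⟩ := hp
    have hlt : #X + #D < #(H.neighborFinset (f p)) := by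
      rw [card_neighborFinset_eq_degree]
      by_cases hpt : p = t
      · rw [hpt] at hxp
        have : #D ≤ T.degree t := hT.connected.card_le_degree_of_forall_dist_le hxp.symm hxD hx
        rw [hpt, hft]
        omega
      · exact hdeg (f p) (hfX p hpD hpt) fun h => hpt (hf.1 hpD htD (h.trans hft.symm))
    obtain ⟨v, hv, hvX, hvf⟩ := exists_mem_notMem_union_image f hlt
    refine ⟨v, hvX, hvf, fun y hy hxy => ?_⟩
    rw [hT.eq_of_adj_of_dist_le t hxy hxp (hx y hy) (hx p hpD)]
    exact ((mem_neighborFinset _ _ _).1 hv).symm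
  · obtain ⟨v, -, hvX, hvf⟩ := exists_mem_notMem_union_image (X := X) (S := D) (A := univ) f
      (by rwa [card_univ])
    exact ⟨v, hvX, hvf, fun y hy hxy => absurd ⟨y, hy, hxy⟩ hp⟩

theorem IsTree.exists_isPartialEmbedding (hT : T.IsTree) {t : α} {u : V} {X : Finset V}
    {D : Finset α} (htD : t ∈ D) (hu : #X + T.degree t + 1 ≤ H.degree u)
    (hdeg : ∀ v ∉ X, v ≠ u → #X + #D ≤ H.degree v) (hV : #X + #D ≤ Fintype.card V) :
    ∃ f : α → V, IsPartialEmbedding T H D f ∧ f t = u ∧ ∀ x ∈ D, x ≠ t → f x ∉ X := by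
  induction D using Finset.strongInduction with
  | H D ih =>
  by_cases hDt : D = {t}
  · subst hDt
    exact ⟨fun _ => u, ⟨by simp, by simp⟩, rfl, by simp⟩
  -- embed a vertex `x` farthest from `t` last: it has at most one neighbour in the rest of `D`
  obtain ⟨x, hxD, hxmax⟩ := D.exists_max_image (T.dist t) ⟨t, htD⟩
  have hxt : x ≠ t := by
    rintro rfl
    refine hDt (eq_singleton_iff_unique_mem.2 ⟨htD, fun y hy => ?_⟩)
    have := hxmax y hy
    rw [dist_self, Nat.le_zero, hT.connected.dist_eq_zero_iff] at this
    exact this.symm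
  have hD' : #(D.erase x) + 1 = #D := card_erase_add_one hxD
  have htD' : t ∈ D.erase x := mem_erase.2 ⟨hxt.symm, htD⟩
  obtain ⟨f, hf, hft, hfX⟩ := ih (D.erase x) (erase_ssubset hxD) htD'
    (fun v hv hvu => (hdeg v hv hvu).trans' (by omega)) (hV.trans' (by omega))
  obtain ⟨v, hvX, hvf, hvadj⟩ := hT.exists_fresh_image hf htD' hft hfX (notMem_erase x D)
    (fun y hy => hxmax y (mem_of_mem_erase hy)) hu
    (fun v hv hvu => (hdeg v hv hvu).trans_lt' (by omega)) (by omega)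
  refine ⟨Function.update f x v, ?_, by rw [Function.update_of_ne hxt.symm, hft], ?_⟩
  · have := hf.update_insert (notMem_erase x D) hvf hvadj
    rwa [← coe_insert, insert_erase hxD] at this
  · intro y hyD hyt
    by_cases hyx : y = x
    · rw [hyx, Function.update_self]
      exact hvX
    · rw [Function.update_of_ne hyx]
      exact hfX y (mem_erase.2 ⟨hyx, hyD⟩) hyt

end PartialEmbedding

theorem exists_private_neighbors {V κ : Type*} [Fintype V] [DecidableEq V] [Nonempty V]
    {H : SimpleGraph V} [DecidableRel H.Adj] {W Y : Finset V} {S : Finset κ}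
    (h : ∀ w ∈ W, #Y + #W * #S ≤ H.degree w) :
    ∃ r : V × κ → V, Set.InjOn r ↑(W ×ˢ S) ∧ ∀ q ∈ W ×ˢ S, H.Adj q.1 (r q) ∧ r q ∉ Y := by
  obtain ⟨r, hr_inj, hr⟩ := exists_injOn_mem_of_card_le (s := W ×ˢ S)
    (A := fun q => H.neighborFinset q.1 \ Y) fun q hq => by
      have := le_card_sdiff Y (H.neighborFinset q.1)
      have := h q.1 (mem_product.1 hq).1
      rw [card_neighborFinset_eq_degree] at *
      rw [card_product]
      omega
  refine ⟨r, hr_inj, fun q hq => ?_⟩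
  have := hr q hq
  rw [mem_sdiff, mem_neighborFinset] at this
  exact this

theorem IsTree.exists_isPartialEmbedding_reserving {α V : Type*} [Fintype α] [DecidableEq α]
    [Fintype V] [DecidableEq V] {T : SimpleGraph α} [DecidableRel T.Adj] {H : SimpleGraph V}
    [DecidableRel H.Adj] {b : ℕ} (hT : T.IsTree) {t : α} {D : Finset α} (htD : t ∈ D)
    (ht : T.degree t ≤ b) (hδ : ∀ v, 4 * b + 1 ≤ H.degree v) {W : Finset V} (hW : #W ≤ b)
    (hgood : ∀ v ∉ W, H.MissesAtMost b v) (hD : #D + 4 * b ≤ Fintype.card V) (u : V) :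
    ∃ (f : α → V) (r : V × Fin 5 → V), IsPartialEmbedding T H D f ∧ f t = u ∧
      (∀ x ∈ D, x ≠ t → f x ∉ W) ∧ Set.InjOn r ↑(W ×ˢ nearEndSlots) ∧
      ∀ q ∈ W ×ˢ nearEndSlots, H.Adj q.1 (r q) ∧ r q ∉ W ∧ r q ∉ f '' D := by
  have : Nonempty V := ⟨u⟩
  obtain ⟨r, hr_inj, hr⟩ := exists_private_neighbors (H := H) (W := W) (Y := insert u W)
    (S := nearEndSlots) fun w _ => by
      have := card_insert_le u W
      have := hδ w
      rw [show #nearEndSlots = 2 from rfl]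
      nlinarith
  set X := W ∪ (W ×ˢ nearEndSlots).image r
  have hX : #X ≤ 3 * b := by
    have : #X ≤ #W + #((W ×ˢ nearEndSlots).image r) := card_union_le _ _
    have := card_image_le (s := W ×ˢ nearEndSlots) (f := r)
    rw [card_product, show #nearEndSlots = 2 from rfl] at this
    omega
  obtain ⟨f, hf, hft, hfX⟩ := hT.exists_isPartialEmbedding (H := H) (u := u) (X := X) htD
    (by have := hδ u; omega)
    (fun v hvX _ => by
      have := hgood v fun h => hvX (mem_union_left _ h)
      unfold MissesAtMost at this
      omega)
    (by omega)
  refine ⟨f, r, hf, hft, fun x hx hxt h => hfX x hx hxt (mem_union_left _ h), hr_inj,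
    fun q hq => ?_⟩
  obtain ⟨hadj, hrY⟩ := hr q hq
  rw [mem_insert, not_or] at hrY
  refine ⟨hadj, hrY.2, fun ⟨y, hy, hyr⟩ => ?_⟩
  by_cases hyt : y = t
  · exact hrY.1 (hyr.symm.trans (hyt ▸ hft))
  · exact hfX y hy hyt (hyr ▸ mem_union_right _ (mem_image_of_mem r hq))

section Linking

variable {ι V : Type*} [DecidableEq ι] [Fintype V] {H : SimpleGraph V} [DecidableRel H.Adj]
  {b : ℕ}

theorem exists_injOn_adj_ends [Fintype ι] [Nonempty ι] {B : Finset V} {x : ι × Fin 5 → V}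
    {r : V × Fin 5 → V} (hι : 2 * b + #B ≤ Fintype.card ι)
    (hx₀ : Function.Injective fun i => x (i, 0)) (hx₄ : Function.Injective fun i => x (i, 4))
    (hr : ∀ w ∈ B, H.MissesAtMost b (r (w, 1)) ∧ H.MissesAtMost b (r (w, 3))) :
    ∃ g : V → ι, Set.InjOn g B ∧
      ∀ w ∈ B, H.Adj (x (g w, 0)) (r (w, 1)) ∧ H.Adj (r (w, 3)) (x (g w, 4)) := by
  obtain ⟨g, hg_inj, hg⟩ := exists_injOn_mem_of_card_le (s := B)
    (A := fun w => {i | H.Adj (x (i, 0)) (r (w, 1)) ∧ H.Adj (r (w, 3)) (x (i, 4))}) fun w hw => by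
      have hsub : ({i | ¬(H.Adj (x (i, 0)) (r (w, 1)) ∧ H.Adj (r (w, 3)) (x (i, 4)))} : Finset ι) ⊆
          ({i | ¬H.Adj (r (w, 1)) (x (i, 0))} : Finset ι) ∪
            ({i | ¬H.Adj (r (w, 3)) (x (i, 4))} : Finset ι) := by
        intro i
        simp only [mem_filter, mem_univ, true_and, mem_union, not_and_or]
        exact Or.imp (mt Adj.symm) id
      have h₁ := (hr w hw).1.card_filter_not_adj_le (s := univ) hx₀.injOn
      have h₃ := (hr w hw).2.card_filter_not_adj_le (s := univ) hx₄.injOn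
      have := (card_le_card hsub).trans (card_union_le _ _)
      have := card_filter_add_card_filter_not (s := (univ : Finset ι))
        fun i => H.Adj (x (i, 0)) (r (w, 1)) ∧ H.Adj (r (w, 3)) (x (i, 4))
      rw [card_univ] at this
      omega
  exact ⟨g, hg_inj, fun w hw => (mem_filter.1 (hg w hw)).2⟩

variable [DecidableEq V] [Nonempty V]

theorem exists_injOn_common_neighbors {J : Finset ι} {L : Finset V} {c₁ c₃ : ι → V}
    (hJ : 4 * b ≤ #J) (hJL : #J ≤ #L) (hL : ∀ v ∈ L, H.MissesAtMost b v)
    (hc₁ : Set.InjOn c₁ J) (hc₃ : Set.InjOn c₃ J)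
    (hc : ∀ i ∈ J, H.MissesAtMost b (c₁ i) ∧ H.MissesAtMost b (c₃ i)) :
    ∃ m : ι → V, Set.InjOn m J ∧ ∀ i ∈ J, m i ∈ L ∧ H.Adj (c₁ i) (m i) ∧ H.Adj (m i) (c₃ i) := by
  obtain ⟨m, hm_inj, hm⟩ := exists_injOn_mem_of_card_le_add (s := J) (L := L) (m := 2 * b)
    (A := fun i => {v ∈ L | H.Adj (c₁ i) v ∧ H.Adj (c₃ i) v}) hJL (by omega)
    (fun i hi => by
      have h₁ := (hc i hi).1.card_le_card_filter_adj_add L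
      have h₃ := (hc i hi).2.card_le_card_filter_adj_add {v ∈ L | H.Adj (c₁ i) v}
      rw [filter_filter] at h₃
      omega)
    (fun v hv => by
      have hsub : {i ∈ J | v ∉ {v ∈ L | H.Adj (c₁ i) v ∧ H.Adj (c₃ i) v}} ⊆
          {i ∈ J | ¬H.Adj v (c₁ i)} ∪ {i ∈ J | ¬H.Adj v (c₃ i)} := by
        intro i hi
        simp only [mem_filter, hv, true_and, not_and_or, mem_union] at hi ⊢
        exact hi.2.imp (fun h => ⟨hi.1, mt Adj.symm h⟩) fun h => ⟨hi.1, mt Adj.symm h⟩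
      have h₁ := (hL v hv).card_filter_not_adj_le hc₁
      have h₃ := (hL v hv).card_filter_not_adj_le hc₃
      have := (card_le_card hsub).trans (card_union_le _ _)
      omega)
  refine ⟨m, hm_inj, fun i hi => ?_⟩
  obtain ⟨hmL, h₁, h₃⟩ := mem_filter.1 (hm i hi)
  exact ⟨hmL, h₁, h₃.symm⟩

theorem exists_links_of_missesAtMost {J : Finset ι} {U : Finset V} {x : ι × Fin 5 → V}
    (hJ : 4 * b ≤ #J) (hU : 3 * #J ≤ #U) (hUgood : ∀ v ∈ U, H.MissesAtMost b v)
    (hx : ∀ i ∈ J, H.MissesAtMost b (x (i, 0)) ∧ H.MissesAtMost b (x (i, 4))) :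
    ∃ σ : ι × Fin 5 → V, Set.InjOn σ ↑(J ×ˢ innerSlots) ∧ (∀ q ∈ J ×ˢ innerSlots, σ q ∈ U) ∧
      ∀ i ∈ J, H.Adj (x (i, 0)) (σ (i, 1)) ∧ H.Adj (σ (i, 1)) (σ (i, 2)) ∧
        H.Adj (σ (i, 2)) (σ (i, 3)) ∧ H.Adj (σ (i, 3)) (x (i, 4)) := by
  have hJ₂ : #(J ×ˢ nearEndSlots) = 2 * #J := by
    rw [card_product, mul_comm]
    rfl
  -- `c (i, 1)` has to be adjacent to the end `x (i, 0)`, and `c (i, 3)` to `x (i, 4)`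
  obtain ⟨c, hc_inj, hc⟩ := exists_injOn_mem_of_card_le (s := J ×ˢ nearEndSlots)
    (A := fun q => {v ∈ U | H.Adj (x (q.1, if q.2 = 1 then 0 else 4)) v}) fun q hq => by
      have hgood : H.MissesAtMost b (x (q.1, if q.2 = 1 then 0 else 4)) := by
        have := hx q.1 (mem_product.1 hq).1
        split_ifs <;> tauto
      have := hgood.card_le_card_filter_adj_add U
      omega
  have hc₁ : ∀ i ∈ J, c (i, 1) ∈ U ∧ H.Adj (x (i, 0)) (c (i, 1)) := fun i hi => by
    simpa using mem_filter.1 (hc (i, 1) (by simp [hi]))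
  have hc₃ : ∀ i ∈ J, c (i, 3) ∈ U ∧ H.Adj (x (i, 4)) (c (i, 3)) := fun i hi => by
    simpa using mem_filter.1 (hc (i, 3) (by simp [hi]))
  set L := U \ (J ×ˢ nearEndSlots).image c
  have hL : #J ≤ #L := by
    have : #U - #((J ×ˢ nearEndSlots).image c) ≤ #L := le_card_sdiff _ _
    have := card_image_le (s := J ×ˢ nearEndSlots) (f := c)
    omega
  have hc_slot : ∀ j ∈ nearEndSlots, Set.InjOn (fun i => c (i, j)) J :=
    fun j hj i hi i' hi' h => congrArg Prod.fst <| hc_inj (by simp_all) (by simp_all) h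
  obtain ⟨m, hm_inj, hm⟩ := exists_injOn_common_neighbors hJ hL
    (fun v hv => hUgood v (mem_sdiff.1 hv).1) (hc_slot 1 (by simp)) (hc_slot 3 (by simp))
    fun i hi => ⟨hUgood _ (hc₁ i hi).1, hUgood _ (hc₃ i hi).1⟩
  refine ⟨withMiddle c m, withMiddle_injOn hc_inj hm_inj fun i hi => (mem_sdiff.1 (hm i hi).1).2,
    withMiddle_mem (fun q hq => (mem_filter.1 (hc q hq)).1) fun i hi => (mem_sdiff.1 (hm i hi).1).1,
    fun i hi => ?_⟩
  simp only [withMiddle, if_true, Fin.reduceEq, if_false]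
  exact ⟨(hc₁ i hi).2, (hm i hi).2.1, (hm i hi).2.2, (hc₃ i hi).2.symm⟩

variable [Fintype ι]

theorem exists_links_through {B U : Finset V} {x : ι × Fin 5 → V} {r : V × Fin 5 → V}
    (hι : 2 * b + #B ≤ Fintype.card ι) (hBU : B ⊆ U)
    (hx₀ : Function.Injective fun i => x (i, 0)) (hx₄ : Function.Injective fun i => x (i, 4))
    (hr_inj : Set.InjOn r ↑(B ×ˢ nearEndSlots))
    (hr : ∀ w ∈ B, ∀ j ∈ nearEndSlots,
      r (w, j) ∈ U \ B ∧ H.MissesAtMost b (r (w, j)) ∧ H.Adj w (r (w, j))) :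
    ∃ (K : Finset ι) (ρ : ι × Fin 5 → V), #K = #B ∧ Set.InjOn ρ ↑(K ×ˢ innerSlots) ∧
      B ⊆ (K ×ˢ innerSlots).image ρ ∧ (∀ q ∈ K ×ˢ innerSlots, ρ q ∈ U) ∧
      ∀ i ∈ K, H.Adj (x (i, 0)) (ρ (i, 1)) ∧ H.Adj (ρ (i, 1)) (ρ (i, 2)) ∧
        H.Adj (ρ (i, 2)) (ρ (i, 3)) ∧ H.Adj (ρ (i, 3)) (x (i, 4)) := by
  obtain rfl | hB := B.eq_empty_or_nonempty
  · exact ⟨∅, fun _ => Classical.arbitrary V, by simp⟩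
  have : Nonempty ι := Fintype.card_pos_iff.1 (by have := hB.card_pos; omega)
  -- the path `g w` gets `r (w, 1), w, r (w, 3)` as its interior
  obtain ⟨g, hg_inj, hg⟩ := exists_injOn_adj_ends (H := H) (x := x) (r := r) hι hx₀ hx₄
    fun w hw => ⟨(hr w hw 1 (by simp)).2.1, (hr w hw 3 (by simp)).2.1⟩
  set β := Function.invFunOn g B
  have hβ : ∀ i ∈ B.image g, β i ∈ B ∧ g (β i) = i := fun i hi => by
    obtain ⟨w, hw, rfl⟩ := mem_image.1 hi
    exact ⟨Function.invFunOn_mem ⟨w, hw, rfl⟩, Function.invFunOn_eq ⟨w, hw, rfl⟩⟩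
  have hr_mem : ∀ q ∈ B.image g ×ˢ nearEndSlots, (β q.1, q.2) ∈ B ×ˢ nearEndSlots :=
    fun q hq => mem_product.2 ⟨(hβ _ (mem_product.1 hq).1).1, (mem_product.1 hq).2⟩
  refine ⟨B.image g, withMiddle (fun q => r (β q.1, q.2)) β, card_image_of_injOn hg_inj, ?_, ?_, ?_,
    fun i hi => ?_⟩
  · refine withMiddle_injOn (fun q hq q' hq' h => ?_) (fun i hi i' hi' h => ?_) fun i hi hmem => ?_
    · have := Prod.mk.inj (hr_inj (mem_coe.2 (hr_mem q hq)) (mem_coe.2 (hr_mem q' hq')) h)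
      refine Prod.ext ?_ this.2
      rw [← (hβ _ (mem_product.1 hq).1).2, ← (hβ _ (mem_product.1 hq').1).2, this.1]
    · rw [← (hβ i hi).2, ← (hβ i' hi').2]
      exact congrArg g h
    · obtain ⟨q, hq, hqi⟩ := mem_image.1 hmem
      obtain ⟨hqB, hq2⟩ := mem_product.1 (hr_mem q hq)
      exact (mem_sdiff.1 (hr _ hqB _ hq2).1).2 (hqi ▸ (hβ i hi).1)
  · intro w hw
    refine mem_image.2 ⟨(g w, 2), by simpa [innerSlots] using ⟨w, hw, rfl⟩, ?_⟩
    simp only [withMiddle, if_true]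
    exact hg_inj.leftInvOn_invFunOn hw
  · exact withMiddle_mem (fun q hq => (mem_sdiff.1 (hr _ (mem_product.1 (hr_mem q hq)).1 _
      (mem_product.1 (hr_mem q hq)).2).1).1) fun i hi => hBU (hβ i hi).1
  · obtain ⟨hβB, hgβ⟩ := hβ i hi
    have := hg _ hβB
    rw [hgβ] at this
    simp only [withMiddle, if_true, Fin.reduceEq, if_false]
    exact ⟨this.1, (hr _ hβB 1 (by simp)).2.2.symm, (hr _ hβB 3 (by simp)).2.2, this.2⟩

theorem exists_links {W U : Finset V} {x : ι × Fin 5 → V} {r : V × Fin 5 → V}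
    (hι : 5 * b ≤ Fintype.card ι) (hU : 3 * Fintype.card ι ≤ #U) (hUW : #(U ∩ W) ≤ b)
    (hgood : ∀ v ∉ W, H.MissesAtMost b v)
    (hx₀ : Function.Injective fun i => x (i, 0)) (hx₄ : Function.Injective fun i => x (i, 4))
    (hxW : ∀ i, x (i, 0) ∉ W ∧ x (i, 4) ∉ W)
    (hr_inj : Set.InjOn r ↑((U ∩ W) ×ˢ nearEndSlots))
    (hr : ∀ w ∈ U ∩ W, ∀ j ∈ nearEndSlots, r (w, j) ∈ U \ W ∧ H.Adj w (r (w, j))) :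
    ∃ e : ι × Fin 5 → V, Set.InjOn e ↑((univ : Finset ι) ×ˢ innerSlots) ∧
      (∀ q ∈ univ ×ˢ innerSlots, e q ∈ U) ∧
      ∀ i, H.Adj (x (i, 0)) (e (i, 1)) ∧ H.Adj (e (i, 1)) (e (i, 2)) ∧
        H.Adj (e (i, 2)) (e (i, 3)) ∧ H.Adj (e (i, 3)) (x (i, 4)) := by
  obtain ⟨K, ρ, hK, hρ_inj, hBρ, hρU, hρ⟩ := exists_links_through (B := U ∩ W) (U := U) (x := x)
    (H := H) (b := b) (by omega) inter_subset_left hx₀ hx₄ hr_inj fun w hw j hj => by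
      obtain ⟨hrU, hrW⟩ := mem_sdiff.1 (hr w hw j hj).1
      exact ⟨mem_sdiff.2 ⟨hrU, fun h => hrW (mem_inter.1 h).2⟩, hgood _ hrW, (hr w hw j hj).2⟩
  set U₁ := U \ (K ×ˢ innerSlots).image ρ
  have hU₁ : 3 * #Kᶜ ≤ #U₁ := by
    have : #U - #((K ×ˢ innerSlots).image ρ) ≤ #U₁ := le_card_sdiff _ _
    have himage := (card_image_le (s := K ×ˢ innerSlots) (f := ρ)).trans_eq (card_product _ _)
    rw [show #innerSlots = 3 from rfl] at himage
    have := card_compl K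
    omega
  have hU₁good : ∀ v ∈ U₁, H.MissesAtMost b v := fun v hv => hgood v fun hvW =>
    (mem_sdiff.1 hv).2 (hBρ (mem_inter.2 ⟨(mem_sdiff.1 hv).1, hvW⟩))
  obtain ⟨σ, hσ_inj, hσU, hσ⟩ := exists_links_of_missesAtMost (J := Kᶜ) (U := U₁) (x := x)
    (by have := card_compl K; omega) hU₁ hU₁good fun i _ => ⟨hgood _ (hxW i).1, hgood _ (hxW i).2⟩
  have hK : ∀ q ∈ (univ : Finset ι) ×ˢ innerSlots, q.1 ∈ K → q ∈ K ×ˢ innerSlots :=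
    fun q hq hqK => mem_product.2 ⟨hqK, (mem_product.1 hq).2⟩
  have hKc : ∀ q ∈ (univ : Finset ι) ×ˢ innerSlots, q.1 ∉ K → q ∈ Kᶜ ×ˢ innerSlots :=
    fun q hq hqK => mem_product.2 ⟨mem_compl.2 hqK, (mem_product.1 hq).2⟩
  refine ⟨fun q => if q.1 ∈ K then ρ q else σ q, ?_, fun q hq => ?_, fun i => ?_⟩
  · refine Set.InjOn.ite (hρ_inj.mono fun q hq => hK q hq.1 hq.2)
      (hσ_inj.mono fun q hq => hKc q hq.1 hq.2) fun q hq q' hq' hqK hq'K h => ?_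
    exact (mem_sdiff.1 (hσU q' (hKc q' hq' hq'K))).2 (h ▸ mem_image_of_mem ρ (hK q hq hqK))
  · dsimp only
    split_ifs with hqK
    · exact hρU q (hK q hq hqK)
    · exact (mem_sdiff.1 (hσU q (hKc q hq hqK))).1
  · by_cases hi : i ∈ K
    · simpa [hi] using hρ i hi
    · simpa [hi] using hσ i (mem_compl.2 hi)

end Linking

end SimpleGraph

section BarePaths

variable {ι α V : Type*} {T : SimpleGraph α} {H : SimpleGraph V}

theorem IsBarePath4.exists_eq_of_adj {p : Fin 5 → α} (hp : IsBarePath4 T p) {j : Fin 5}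
    (hj : j ∈ innerSlots) {y : α} (hy : T.Adj (p j) y) :
    ∃ j', (pathGraph 5).Adj j j' ∧ p j' = y := by
  obtain ⟨hprev, hnext, hne, hj0, hj4⟩ : (pathGraph 5).Adj j (j - 1) ∧ (pathGraph 5).Adj j (j + 1) ∧
      j - 1 ≠ j + 1 ∧ j ≠ 0 ∧ j ≠ 4 := by
    simp only [innerSlots, mem_insert, mem_singleton] at hj
    rw [pathGraph_adj, pathGraph_adj]
    rcases hj with rfl | rfl | rfl <;> decide
  have hdeg := hp.2.2 j hj0 hj4
  have hN : {p (j - 1), p (j + 1)} = T.neighborSet (p j) := by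
    refine Set.eq_of_subset_of_ncard_le ?_ (by rw [hdeg, Set.ncard_pair (hp.1.ne hne)])
      (Set.finite_of_ncard_ne_zero (by omega))
    rintro z (rfl | rfl)
    exacts [adj_of_pathGraph_adj hp.2.1 hprev, adj_of_pathGraph_adj hp.2.1 hnext]
  have hy' : y ∈ T.neighborSet (p j) := hy
  rw [← hN] at hy'
  rcases hy' with rfl | rfl
  exacts [⟨_, hprev, rfl⟩, ⟨_, hnext, rfl⟩]

variable [Fintype ι] [DecidableEq α]

def innerVertices (P : ι → Fin 5 → α) : Finset α :=
  (univ ×ˢ innerSlots).image (Function.uncurry P)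

variable {P : ι → Fin 5 → α}

theorem apply_mem_innerVertices (i : ι) {j : Fin 5} (hj : j ∈ innerSlots) :
    P i j ∈ innerVertices P :=
  mem_image.2 ⟨(i, j), mem_product.2 ⟨mem_univ i, hj⟩, rfl⟩

theorem apply_notMem_innerVertices (hπ : Function.Injective (Function.uncurry P)) (i : ι)
    {j : Fin 5} (hj : j ∉ innerSlots) : P i j ∉ innerVertices P := by
  intro h
  obtain ⟨q, hq, hqP⟩ := mem_image.1 h
  obtain rfl := @hπ q (i, j) hqP
  exact hj (mem_product.1 hq).2

theorem card_innerVertices (hπ : Function.Injective (Function.uncurry P)) :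
    #(innerVertices P) = 3 * Fintype.card ι := by
  rw [innerVertices, card_image_of_injective _ hπ, card_product, card_univ, mul_comm]
  rfl

theorem extend_apply_of_notMem_innerVertices (hπ : Function.Injective (Function.uncurry P))
    {e : ι × Fin 5 → V} {f₁ : α → V} (he : ∀ i, e (i, 0) = f₁ (P i 0) ∧ e (i, 4) = f₁ (P i 4))
    {x : α} (hx : x ∉ innerVertices P) : Function.extend (Function.uncurry P) e f₁ x = f₁ x := by
  by_cases hq : ∃ q, Function.uncurry P q = x
  · obtain ⟨⟨i, j⟩, rfl⟩ := hq
    have : j = 0 ∨ j = 4 := by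
      have := mt (apply_mem_innerVertices (P := P) i) hx
      fin_cases j <;> simp_all
    rw [hπ.extend_apply]
    rcases this with rfl | rfl
    exacts [(he i).1, (he i).2]
  · exact Function.extend_apply' _ _ _ hq

theorem exists_embedding_of_links (hP : ∀ i, IsBarePath4 T (P i))
    (hπ : Function.Injective (Function.uncurry P))
    {f₁ : α → V} (hf₁ : IsPartialEmbedding T H (↑(innerVertices P))ᶜ f₁)
    {e : ι × Fin 5 → V} (he_inj : Set.InjOn e ↑((univ : Finset ι) ×ˢ innerSlots))
    (he_fresh : ∀ q ∈ (univ : Finset ι) ×ˢ innerSlots, e q ∉ f₁ '' (↑(innerVertices P))ᶜ)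
    (he : ∀ i, H.Adj (f₁ (P i 0)) (e (i, 1)) ∧ H.Adj (e (i, 1)) (e (i, 2)) ∧
      H.Adj (e (i, 2)) (e (i, 3)) ∧ H.Adj (e (i, 3)) (f₁ (P i 4))) :
    ∃ f : α → V, Function.Injective f ∧ (∀ ⦃x y⦄, T.Adj x y → H.Adj (f x) (f y)) ∧
      ∀ x ∉ innerVertices P, f x = f₁ x := by
  set e' := fun q => if q.2 ∈ innerSlots then e q else f₁ (Function.uncurry P q)
  have he' : ∀ q ∈ (univ : Finset ι) ×ˢ innerSlots, e' q = e q := fun q hq =>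
    if_pos (mem_product.1 hq).2
  set f := Function.extend (Function.uncurry P) e' f₁
  have hfP : ∀ q, f (Function.uncurry P q) = e' q := hπ.extend_apply e' f₁
  have hfD : ∀ x ∉ innerVertices P, f x = f₁ x := fun x =>
    extend_apply_of_notMem_innerVertices hπ fun i => by simp [e', innerSlots]
  have hadj_inner : ∀ x y, T.Adj x y → x ∈ innerVertices P → H.Adj (f x) (f y) := by
    intro x y hxy hx
    obtain ⟨⟨i, j⟩, hq, rfl⟩ := mem_image.1 hx
    obtain ⟨j', hjj', rfl⟩ := (hP i).exists_eq_of_adj (mem_product.1 hq).2 hxy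
    change H.Adj (f (Function.uncurry P (i, j))) (f (Function.uncurry P (i, j')))
    rw [hfP, hfP]
    refine adj_of_pathGraph_adj (p := fun j => e' (i, j)) (fun j => ?_) hjj'
    obtain ⟨h₀, h₁, h₂, h₃⟩ := he i
    fin_cases j <;> simpa [e', innerSlots]
  refine ⟨f, fun x y hxy => ?_, fun x y hxy => ?_, hfD⟩
  · by_cases hx : x ∈ innerVertices P <;> by_cases hy : y ∈ innerVertices P
    · obtain ⟨q, hq, rfl⟩ := mem_image.1 hx
      obtain ⟨q', hq', rfl⟩ := mem_image.1 hy
      rw [hfP, hfP, he' q hq, he' q' hq'] at hxy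
      rw [he_inj hq hq' hxy]
    · obtain ⟨q, hq, rfl⟩ := mem_image.1 hx
      rw [hfP, hfD y hy, he' q hq] at hxy
      exact absurd ⟨y, hy, hxy.symm⟩ (he_fresh q hq)
    · obtain ⟨q, hq, rfl⟩ := mem_image.1 hy
      rw [hfP, hfD x hx, he' q hq] at hxy
      exact absurd ⟨x, hx, hxy⟩ (he_fresh q hq)
    · rw [hfD x hx, hfD y hy] at hxy
      exact hf₁.1 hx hy hxy
  · by_cases hx : x ∈ innerVertices P
    · exact hadj_inner x y hxy hx
    by_cases hy : y ∈ innerVertices P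
    · exact (hadj_inner y x hxy.symm hy).symm
    rw [hfD x hx, hfD y hy]
    exact hf₁.2 hx hy hxy

end BarePaths

theorem SimpleGraph.IsTree.exists_embedding_of_bare_paths {ι α V : Type*} [Fintype ι]
    [DecidableEq ι] [Fintype α] [DecidableEq α] [Fintype V] [DecidableEq V]
    {T : SimpleGraph α} [DecidableRel T.Adj] {H : SimpleGraph V} [DecidableRel H.Adj] {b : ℕ}
    (hT : T.IsTree) (hΔ : ∀ x, T.degree x ≤ b) (hαV : Fintype.card α ≤ Fintype.card V)
    (hδ : ∀ v, 4 * b + 1 ≤ H.degree v) {W : Finset V} (hW : #W ≤ b)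
    (hgood : ∀ v ∉ W, H.MissesAtMost b v) {P : ι → Fin 5 → α} (hP : ∀ i, IsBarePath4 T (P i))
    (hπ : Function.Injective (Function.uncurry P)) (hι : 5 * b ≤ Fintype.card ι)
    {t : α} (ht : ∀ i j, P i j ≠ t) (u : V) :
    ∃ f : α → V, Function.Injective f ∧ (∀ ⦃x y⦄, T.Adj x y → H.Adj (f x) (f y)) ∧ f t = u := by
  have : Nonempty V := ⟨u⟩
  set D := (innerVertices P)ᶜ
  have hD : #D + 3 * Fintype.card ι = Fintype.card α := by
    rw [← card_innerVertices hπ]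
    exact card_compl_add_card _
  have htD : t ∈ D := mem_compl.2 fun h => by
    obtain ⟨q, -, hq⟩ := mem_image.1 h
    exact ht q.1 q.2 hq
  obtain ⟨f₁, r, hf₁, hf₁t, hf₁W, hr_inj, hr⟩ :=
    hT.exists_isPartialEmbedding_reserving htD (hΔ t) hδ hW hgood (by omega) u
  have hend : ∀ i, ∀ j ∈ ({0, 4} : Finset (Fin 5)), P i j ∈ D := fun i j hj =>
    mem_compl.2 <| apply_notMem_innerVertices hπ i <| by
      simp only [mem_insert, mem_singleton] at hj
      rcases hj with rfl | rfl <;> decide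
  have hend_inj : ∀ j ∈ ({0, 4} : Finset (Fin 5)), Function.Injective fun i => f₁ (P i j) :=
    fun j hj i i' h => congrArg Prod.fst
      (@hπ (i, j) (i', j) (hf₁.1 (mem_coe.2 (hend i j hj)) (mem_coe.2 (hend i' j hj)) h))
  set U := (D.image f₁)ᶜ
  have hU : 3 * Fintype.card ι ≤ #U := by
    have : #U + #(D.image f₁) = Fintype.card V := card_compl_add_card _
    rw [card_image_of_injOn hf₁.1] at this
    omega
  obtain ⟨e, he_inj, heU, he⟩ := exists_links (H := H) (W := W) (U := U)
    (x := fun q => f₁ (Function.uncurry P q)) (r := r) hι hU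
    ((card_le_card inter_subset_right).trans hW) hgood (hend_inj 0 (by simp))
    (hend_inj 4 (by simp))
    (fun i => ⟨hf₁W _ (hend i 0 (by simp)) (ht i 0), hf₁W _ (hend i 4 (by simp)) (ht i 4)⟩)
    (hr_inj.mono (coe_subset.2 (product_subset_product_left inter_subset_right)))
    fun w hw j hj => by
      obtain ⟨hadj, hrW, hrD⟩ := hr (w, j) (mem_product.2 ⟨(mem_inter.1 hw).2, hj⟩)
      exact ⟨mem_sdiff.2 ⟨mem_compl.2 fun h => hrD (by simpa using h), hrW⟩, hadj⟩
  obtain ⟨f, hf, hfadj, hfD⟩ := exists_embedding_of_links hP hπ (by rwa [← coe_compl]) he_inj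
    (fun q hq ⟨y, hy, hyq⟩ => mem_compl.1 (heU q hq) (mem_image.2 ⟨y, by simpa [D] using hy, hyq⟩))
    he
  exact ⟨f, hf, hfadj, (hfD t (mem_compl.1 htD)).trans hf₁t⟩

theorem embed_tree_with_bare_paths_general (ξ : ℝ) (hξ0 : 0 < ξ) :
    ∃ μ₀ : ℝ, 0 < μ₀ ∧ ∀ μ : ℝ, 0 < μ → μ ≤ μ₀ →
      ∃ n₀ : ℕ, ∀ n : ℕ, n₀ ≤ n →
        ∀ (V : Type) [Finite V] (H : SimpleGraph V),
          n ≤ Nat.card V →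
          (∀ v : V, ξ * n ≤ ((H.neighborSet v).ncard : ℝ)) →
          (∃ W : Set V, (W.ncard : ℝ) ≤ μ * n ∧
            ∀ v : V, v ∉ W → (Nat.card V : ℝ) - μ * n ≤ ((H.neighborSet v).ncard : ℝ)) →
          ∀ T : SimpleGraph (Fin n), T.IsTree → MaxDegLE T (μ * n) →
            ∀ (k : ℕ) (P : Fin k → Fin 5 → Fin n),
              10 * μ * n ≤ (k : ℝ) →
              (∀ i, IsBarePath4 T (P i)) →
              (∀ i j : Fin k, i ≠ j → ∀ a b : Fin 5, P i a ≠ P j b) →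
              ∀ t : Fin n, (∀ i a, P i a ≠ t) →
                ∀ u : V, ∃ f : Fin n → V, Function.Injective f ∧
                  (∀ ⦃x y : Fin n⦄, T.Adj x y → H.Adj (f x) (f y)) ∧ f t = u := by
  refine ⟨ξ / 10, by positivity, fun μ hμ hμξ => ⟨⌈1 / μ⌉₊, fun n hn V _ H hnV hδ hW T hT hΔ k P
    hk hP hdisj t ht u => ?_⟩⟩
  classical
  have := Fintype.ofFinite V
  obtain ⟨W, hW, hWdeg⟩ := hW
  rw [Nat.card_eq_fintype_card] at hnV hWdeg
  simp only [MaxDegLE, ncard_neighborSet_eq_degree] at hδ hWdeg hΔ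
  have hμn : 1 ≤ μ * n := (div_le_iff₀' hμ).1 (Nat.ceil_le.1 hn)
  have hb : μ * n ≤ ⌈μ * n⌉₊ := Nat.le_ceil _
  have hb' : (⌈μ * n⌉₊ : ℝ) < μ * n + 1 := Nat.ceil_lt_add_one (by positivity)
  have hξn : 10 * (μ * n) ≤ ξ * n := by nlinarith
  refine hT.exists_embedding_of_bare_paths (b := ⌈μ * n⌉₊) (W := W.toFinset) (fun x => ?_)
    (by simpa using hnV) (fun v => ?_) ?_ (fun v hv => ?_) hP
    (Function.injective_uncurry_of_disjoint (fun i => (hP i).1) hdisj) ?_ ht u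
  · exact_mod_cast (hΔ x).trans hb
  · exact_mod_cast (show (4 * ⌈μ * n⌉₊ + 1 : ℝ) ≤ H.degree v by linarith [hδ v])
  · rw [← Set.ncard_eq_toFinset_card']
    exact_mod_cast hW.trans hb
  · exact_mod_cast (show (Fintype.card V : ℝ) ≤ H.degree v + ⌈μ * n⌉₊ by
      linarith [hWdeg v (by simpa using hv)])
  · rw [Fintype.card_fin]
    exact_mod_cast (show (5 * ⌈μ * n⌉₊ : ℝ) ≤ k by linarith)

theorem embed_tree_with_bare_paths (ξ : ℝ) (hξ0 : 0 < ξ) (hξ1 : ξ ≤ 1 / 100) :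
    ∃ μ₀ : ℝ, 0 < μ₀ ∧ ∀ μ : ℝ, 0 < μ → μ ≤ μ₀ →
      ∃ n₀ : ℕ, ∀ n : ℕ, n₀ ≤ n →
        ∀ (V : Type) [Finite V] (H : SimpleGraph V),
          n ≤ Nat.card V →
          (∀ v : V, ξ * n ≤ ((H.neighborSet v).ncard : ℝ)) →
          (∃ W : Set V, (W.ncard : ℝ) ≤ μ * n ∧
            ∀ v : V, v ∉ W → (Nat.card V : ℝ) - μ * n ≤ ((H.neighborSet v).ncard : ℝ)) →
          ∀ T : SimpleGraph (Fin n), T.IsTree → MaxDegLE T (μ * n) →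
            ∀ (k : ℕ) (P : Fin k → Fin 5 → Fin n),
              10 * μ * n ≤ (k : ℝ) →
              (∀ i, IsBarePath4 T (P i)) →
              (∀ i j : Fin k, i ≠ j → ∀ a b : Fin 5, P i a ≠ P j b) →
              ∀ t : Fin n, (∀ i a, P i a ≠ t) →
                ∀ u : V, ∃ f : Fin n → V, Function.Injective f ∧
                  (∀ ⦃x y : Fin n⦄, T.Adj x y → H.Adj (f x) (f y)) ∧ f t = u :=
  embed_tree_with_bare_paths_general ξ hξ0
end

section
/- For every integer C ≥ 1 there exists r₀ such that the following holds for all integers r ≥ r₀. Let T' be the perfect ternary tree with C+1 levels, having (3^C−1)/2 internal vertices and 3^C leaves, and let T be a tree obtained from T' by identifying each leaf of T' with a vertex of a (possibly different) tree of size r, these 3^C attached trees being pairwise disjoint. Let G be a graph with a vertex partition V(G) = U₁ ∪ U₂ ∪ W such that |U₁| = |U₂|, |W| = C, the induced subgraphs on U₁ and on U₂ are complete, every vertex of W is adjacent to every vertex of U₁ ∪ U₂, and G has no other edges. If G contains a copy of T (an injective graph homomorphism from T to G), then |U₁| ≥ (3^C+1)r/2. -/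
open SimpleGraph

/-- `H` contains a copy of `T`: there is an injective graph homomorphism from `T` to `H`. -/
def ContainsCopy {V W : Type*} (H : SimpleGraph W) (T : SimpleGraph V) : Prop :=
  ∃ f : V → W, Function.Injective f ∧ ∀ ⦃u v : V⦄, T.Adj u v → H.Adj (f u) (f v)

/-- `k` is a child of `m` in the heap-style encoding of the rooted ternary tree (root `1`,
children of `m` are `3m-1`, `3m`, `3m+1`). -/
def ternaryChild (m k : ℕ) : Prop := k = 3 * m - 1 ∨ k = 3 * m ∨ k = 3 * m + 1

/-- The tree obtained from the perfect ternary tree with levels `0,…,C` (whose `(3^C-1)/2`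
internal vertices are encoded heap-style by `1,…,(3^C-1)/2` and whose `3^C` leaves are encoded
by `(3^C-1)/2 + 1,…,(3^(C+1)-1)/2`) by identifying the `j`-th leaf with the vertex `roots j`
of the tree `Ts j` on `s` vertices, these attached trees being pairwise disjoint. -/
def gluedTernary (C s : ℕ) (Ts : Fin (3 ^ C) → SimpleGraph (Fin s))
    (roots : Fin (3 ^ C) → Fin s) :
    SimpleGraph (Fin ((3 ^ C - 1) / 2) ⊕ Fin (3 ^ C) × Fin s) :=
  SimpleGraph.fromRel fun x y =>
    match x, y with
    | Sum.inl i, Sum.inl i' => ternaryChild ((i : ℕ) + 1) ((i' : ℕ) + 1)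
    | Sum.inl i, Sum.inr (j, a) =>
        ternaryChild ((i : ℕ) + 1) ((3 ^ C - 1) / 2 + 1 + (j : ℕ)) ∧ a = roots j
    | Sum.inr _, Sum.inl _ => False
    | Sum.inr (j, a), Sum.inr (j', b) => j = j' ∧ (Ts j).Adj a b

/-!
Delete from the glued tree the at most `C` vertices that the copy sends to `W`. Since `U₁` and
`U₂` are not joined, each remaining component lands inside `U₁` or inside `U₂`, so colouring the
skeleton vertices by their side gives a `±1`-colouring that is constant on every edge avoiding the
set `D` of skeleton vertices whose piece (the vertex itself, or for a leaf its whole attached tree)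
meets the preimage of `W`; distinct pieces are disjoint, so `|D| ≤ C`.

In a complete `b`-ary tree of depth `n` with `b ≥ 3` odd, such a colouring has
`|Σ_{leaves ∉ D} colour| ≥ b^(n-|D|) + #(leaves in D)` whenever `|D| ≤ n`. Induct on `|D|`: if some
`x ∈ D` has depth at least `|D|`, give the subtree of `x` the colour of its parent and drop `x`
from `D`; this moves the sum by at most `2 b^(n-depth x) ≤ 2 b^(n-|D|)` (by `1` if `x` is a leaf,
which also leaves `D` with one leaf fewer). Otherwise every vertex of depth `|D|` survives, each
subtree rooted there is monochromatic, and the sum is `b^(n-|D|)` times a sum of an odd number of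
signs. With `b = 3`, `n = C` this says that one side receives more than half of the `3^C` leaves
as untouched leaves, each carrying a whole attached tree of `r` vertices.
-/

open Finset

lemma sum_units_ne_zero_of_odd_card {α : Type*} {s : Finset α} (g : α → ℤˣ) (hs : Odd #s) :
    ∑ a ∈ s, (g a : ℤ) ≠ 0 := by
  intro h
  have hcast : ((∑ a ∈ s, (g a : ℤ) : ℤ) : ZMod 2) = #s := by
    rw [Int.cast_sum, ← nsmul_one, ← sum_const]
    refine sum_congr rfl fun a _ => ?_
    rcases Int.units_eq_one_or (g a) with h | h <;> simp [h]
  rw [h, Int.cast_zero, ZMod.natCast_eq_one_iff_odd.2 hs] at hcast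
  exact zero_ne_one hcast

lemma SimpleGraph.Reachable.iff_of_forall_adj {α : Type*} {H : SimpleGraph α} {P : α → Prop}
    (hP : ∀ ⦃a b⦄, H.Adj a b → (P a ↔ P b)) {a b : α} (h : H.Reachable a b) : P a ↔ P b := by
  rw [reachable_iff_reflTransGen] at h
  induction h with
  | refl => rfl
  | tail _ hbc ih => exact ih.trans (hP hbc)

section BranchingTree

variable {b : ℕ}

-- An address lists the child indices from the vertex up to the root: `l.tail` is the parent
-- of `l`, and the descendants of `x` are the lists with suffix `x`.
def addresses (b n : ℕ) : Finset (List (Fin b)) :=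
  (univ : Finset (Fin n → Fin b)).map ⟨List.ofFn, List.ofFn_injective⟩

lemma mem_addresses {n : ℕ} {l : List (Fin b)} : l ∈ addresses b n ↔ l.length = n := by
  simp only [addresses, mem_map, mem_univ, true_and, Function.Embedding.coeFn_mk]
  refine ⟨fun ⟨v, hv⟩ => hv ▸ List.length_ofFn, fun h => ?_⟩
  subst h
  exact ⟨fun i => l[i], List.ofFn_getElem⟩

lemma card_addresses (n : ℕ) : #(addresses b n) = b ^ n := by
  simp [addresses]

lemma card_addresses_filter_suffix {n : ℕ} {x : List (Fin b)} (hx : x.length ≤ n) :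
    #{l ∈ addresses b n | x <:+ l} = b ^ (n - x.length) := by
  rw [← card_addresses (n - x.length),
    ← card_image_of_injective (addresses b (n - x.length)) (List.append_left_injective x)]
  congr 1
  ext l
  simp only [mem_filter, mem_image, mem_addresses]
  constructor
  · rintro ⟨hl, z, rfl⟩
    exact ⟨z, by simp at hl; omega, rfl⟩
  · rintro ⟨z, hz, rfl⟩
    exact ⟨by simp; omega, List.suffix_append z x⟩

def leafSignSum (n : ℕ) (D : Finset (List (Fin b))) (χ : List (Fin b) → ℤˣ) : ℤ :=
  ∑ l ∈ addresses b n with l ∉ D, (χ l : ℤ)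

def ConstantOnEdgesOff (n : ℕ) (D : Finset (List (Fin b))) (χ : List (Fin b) → ℤˣ) : Prop :=
  ∀ (i : Fin b) (l : List (Fin b)), l.length < n → l ∉ D → i :: l ∉ D → χ (i :: l) = χ l

def recolorSubtree (χ : List (Fin b) → ℤˣ) (x : List (Fin b)) : List (Fin b) → ℤˣ :=
  fun l => if x <:+ l then χ x.tail else χ l

variable {n : ℕ} {D : Finset (List (Fin b))} {χ : List (Fin b) → ℤˣ}

lemma ConstantOnEdgesOff.recolorSubtree (hχ : ConstantOnEdgesOff n D χ) (x : List (Fin b)) :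
    ConstantOnEdgesOff n (D.erase x) (recolorSubtree χ x) := by
  intro i l hl hlD hilD
  by_cases hxl : x <:+ l
  · simp [_root_.recolorSubtree, hxl, hxl.trans (List.suffix_cons i l)]
  by_cases hxil : x <:+ i :: l
  · obtain rfl : x = i :: l := (List.suffix_cons_iff.1 hxil).resolve_right hxl
    simp [_root_.recolorSubtree, hxl]
  have hlx : l ≠ x := by rintro rfl; exact hxl List.suffix_rfl
  have hilx : i :: l ≠ x := by rintro rfl; exact hxil List.suffix_rfl
  simp only [_root_.recolorSubtree, if_neg hxl, if_neg hxil]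
  exact hχ i l hl (by simpa [hlx] using hlD) (by simpa [hilx] using hilD)

lemma leafSignSum_erase_recolorSubtree_of_length_eq {x : List (Fin b)} (hx : x ∈ D)
    (hxn : x.length = n) :
    leafSignSum n (D.erase x) (recolorSubtree χ x) = (χ x.tail : ℤ) + leafSignSum n D χ := by
  have hleaves : {l ∈ addresses b n | l ∉ D.erase x} = insert x {l ∈ addresses b n | l ∉ D} := by
    ext l
    by_cases hlx : l = x <;> simp [hlx, mem_addresses, hxn]
  rw [leafSignSum, hleaves, sum_insert (by simp [hx]), leafSignSum]
  congr 1
  · simp [_root_.recolorSubtree]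
  refine sum_congr rfl fun l hl => ?_
  have hxl : ¬x <:+ l := fun h =>
    (mem_filter.1 hl).2 (h.eq_of_length (by rw [hxn, mem_addresses.1 (mem_filter.1 hl).1]) ▸ hx)
  simp [_root_.recolorSubtree, hxl]

lemma abs_leafSignSum_erase_recolorSubtree_sub_le {x : List (Fin b)} (hxn : x.length < n) :
    |leafSignSum n (D.erase x) (recolorSubtree χ x) - leafSignSum n D χ| ≤
      2 * b ^ (n - x.length) := by
  have hleaves : {l ∈ addresses b n | l ∉ D.erase x} = {l ∈ addresses b n | l ∉ D} := by
    refine filter_congr fun l hl => ?_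
    have hlx : l ≠ x := by rintro rfl; exact hxn.ne (mem_addresses.1 hl)
    simp [hlx]
  rw [leafSignSum, leafSignSum, hleaves, ← sum_sub_distrib]
  calc _ ≤ ∑ l ∈ addresses b n with l ∉ D, |(recolorSubtree χ x l : ℤ) - χ l| :=
        abs_sum_le_sum_abs _ _
    _ ≤ ∑ l ∈ addresses b n, if x <:+ l then (2 : ℤ) else 0 := by
        refine (sum_le_sum fun l _ => ?_).trans
          (sum_le_sum_of_subset_of_nonneg (filter_subset _ _) fun l _ _ => ?_)
        · by_cases hxl : x <:+ l
          · rw [_root_.recolorSubtree, if_pos hxl, if_pos hxl]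
            have := abs_sub (χ x.tail : ℤ) (χ l)
            rwa [Int.isUnit_iff_abs_eq.1 (χ x.tail).isUnit,
              Int.isUnit_iff_abs_eq.1 (χ l).isUnit] at this
          · simp [_root_.recolorSubtree, hxl]
        · split_ifs <;> norm_num
    _ = 2 * b ^ (n - x.length) := by
        rw [← sum_filter, sum_const, card_addresses_filter_suffix hxn.le]
        simp [mul_comm]

lemma ConstantOnEdgesOff.eq_of_isSuffix {v : ℕ} (hχ : ConstantOnEdgesOff n D χ)
    (hD : ∀ x ∈ D, x.length < v) {u l : List (Fin b)} (hul : u <:+ l) (hu : v ≤ u.length)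
    (hl : l.length ≤ n) : χ l = χ u := by
  obtain ⟨z, rfl⟩ := hul
  induction z with
  | nil => rfl
  | cons i z ih =>
    simp only [List.cons_append, List.length_cons, List.length_append] at hl ⊢
    have hnotD : ∀ y : List (Fin b), v ≤ y.length → y ∉ D := fun y hy h => (hD y h).not_ge hy
    rw [hχ i _ (by simp; omega) (hnotD _ (by simp; omega)) (hnotD _ (by simp; omega))]
    exact ih (by simp; omega)

lemma leafSignSum_eq_pow_mul {v : ℕ} (hvn : v ≤ n) (hD : ∀ x ∈ D, x.length < v)
    (hχ : ConstantOnEdgesOff n D χ) :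
    leafSignSum n D χ = b ^ (n - v) * ∑ u ∈ addresses b v, (χ u : ℤ) := by
  have hleaves : {l ∈ addresses b n | l ∉ D} = addresses b n :=
    filter_true_of_mem fun l hl h => (hD l h).not_ge (by rw [mem_addresses.1 hl]; omega)
  have hmaps : ∀ l ∈ addresses b n, l.drop (n - v) ∈ addresses b v := fun l hl => by
    simp [mem_addresses.1 hl, mem_addresses]; omega
  rw [leafSignSum, hleaves, ← sum_fiberwise_of_maps_to hmaps, mul_sum]
  refine sum_congr rfl fun u hu => ?_
  have hfiber : {l ∈ addresses b n | l.drop (n - v) = u} = {l ∈ addresses b n | u <:+ l} := by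
    refine filter_congr fun l hl => ?_
    rw [List.suffix_iff_eq_drop, mem_addresses.1 hl, mem_addresses.1 hu, eq_comm]
  rw [hfiber, sum_congr rfl fun l hl => congrArg Units.val (hχ.eq_of_isSuffix hD
      (mem_filter.1 hl).2 (mem_addresses.1 hu).ge (mem_addresses.1 (mem_filter.1 hl).1).le),
    sum_const, card_addresses_filter_suffix (mem_addresses.1 hu ▸ hvn), mem_addresses.1 hu,
    nsmul_eq_mul]
  push_cast
  ring

lemma le_abs_leafSignSum_of_erase (hb : 3 ≤ b) {x : List (Fin b)} (hxD : x ∈ D)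
    (hx : #D ≤ x.length) (hxn : x.length ≤ n) (hDn : #D ≤ n)
    (ih : (b : ℤ) ^ (n - #(D.erase x)) + #{y ∈ D.erase x | y.length = n} ≤
      |leafSignSum n (D.erase x) (recolorSubtree χ x)|) :
    (b : ℤ) ^ (n - #D) + #{y ∈ D | y.length = n} ≤ |leafSignSum n D χ| := by
  have hD1 : 1 ≤ #D := card_pos.2 ⟨x, hxD⟩
  rw [card_erase_of_mem hxD, show n - (#D - 1) = n - #D + 1 by omega, pow_succ] at ih
  have hpow : (1 : ℤ) ≤ b ^ (n - #D) := one_le_pow₀ (by omega)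
  rcases hxn.lt_or_eq with hxn | hxn
  · have hleaves : {y ∈ D.erase x | y.length = n} = {y ∈ D | y.length = n} := by
      rw [filter_erase, erase_eq_of_notMem (by simp [hxn.ne])]
    have hchange := abs_leafSignSum_erase_recolorSubtree_sub_le (D := D) (χ := χ) hxn
    have hpow' : (b : ℤ) ^ (n - x.length) ≤ b ^ (n - #D) := pow_le_pow_right₀ (by omega) (by omega)
    have := abs_sub_abs_le_abs_sub (leafSignSum n (D.erase x) (recolorSubtree χ x))
      (leafSignSum n D χ)
    rw [hleaves] at ih
    nlinarith
  · have hleaf : 1 ≤ #{y ∈ D | y.length = n} := card_pos.2 ⟨x, by simp [hxD, hxn]⟩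
    rw [filter_erase, card_erase_of_mem (by simp [hxD, hxn]),
      leafSignSum_erase_recolorSubtree_of_length_eq hxD hxn] at ih
    have := abs_add_le (χ x.tail : ℤ) (leafSignSum n D χ)
    rw [Int.isUnit_iff_abs_eq.1 (χ x.tail).isUnit] at this
    push_cast [Nat.cast_sub hleaf] at ih
    nlinarith

lemma pow_le_abs_leafSignSum_of_forall_length_lt (hb : Odd b) (hDn : #D ≤ n)
    (hD : ∀ x ∈ D, x.length < #D) (hχ : ConstantOnEdgesOff n D χ) :
    (b : ℤ) ^ (n - #D) ≤ |leafSignSum n D χ| := by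
  rw [leafSignSum_eq_pow_mul hDn hD hχ, abs_mul, abs_pow, Nat.abs_cast]
  have hodd : Odd #(addresses b #D) := by rw [card_addresses]; exact hb.pow
  have := Int.one_le_abs (sum_units_ne_zero_of_odd_card χ hodd)
  have hb0 : (0 : ℤ) < b := by exact_mod_cast hb.pos
  nlinarith [pow_pos hb0 (n - #D)]

theorem pow_add_card_le_abs_leafSignSum (hb : Odd b) (hb3 : 3 ≤ b)
    (D : Finset (List (Fin b))) (hD : ∀ x ∈ D, x.length ≤ n) (hDn : #D ≤ n)
    (χ : List (Fin b) → ℤˣ) (hχ : ConstantOnEdgesOff n D χ) :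
    (b : ℤ) ^ (n - #D) + #{x ∈ D | x.length = n} ≤ |leafSignSum n D χ| := by
  induction D using Finset.strongInduction generalizing χ with
  | H D ih =>
  by_cases hdeep : ∃ x ∈ D, #D ≤ x.length
  · obtain ⟨x, hxD, hx⟩ := hdeep
    have hcard : #(D.erase x) = #D - 1 := card_erase_of_mem hxD
    exact le_abs_leafSignSum_of_erase hb3 hxD hx (hD x hxD) hDn
      (ih _ (erase_ssubset hxD) (fun y hy => hD y (mem_of_mem_erase hy)) (by omega) _
        (hχ.recolorSubtree x))
  · push Not at hdeep
    have hleaves : {x ∈ D | x.length = n} = ∅ :=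
      filter_eq_empty_iff.2 fun x hx => by have := hdeep x hx; omega
    rw [hleaves, card_empty, Nat.cast_zero, add_zero]
    exact pow_le_abs_leafSignSum_of_forall_length_lt hb hDn hdeep hχ

theorem pow_add_one_le_two_mul_card_or (hb : Odd b) (hb3 : 3 ≤ b)
    (D : Finset (List (Fin b))) (hD : ∀ x ∈ D, x.length ≤ n) (hDn : #D ≤ n)
    (p : List (Fin b) → Prop) [DecidablePred p]
    (hp : ConstantOnEdgesOff n D fun l => if p l then 1 else -1) :
    b ^ n + 1 ≤ 2 * #{l ∈ addresses b n | l ∉ D ∧ p l} ∨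
      b ^ n + 1 ≤ 2 * #{l ∈ addresses b n | l ∉ D ∧ ¬p l} := by
  have hgap := pow_add_card_le_abs_leafSignSum hb hb3 D hD hDn _ hp
  have hsign : leafSignSum n D (fun l => if p l then 1 else -1) =
      #{l ∈ addresses b n | l ∉ D ∧ p l} - #{l ∈ addresses b n | l ∉ D ∧ ¬p l} := by
    simp only [leafSignSum, apply_ite Units.val, Units.val_one, Units.val_neg, sum_ite, sum_const,
      filter_filter, nsmul_eq_mul, mul_one, mul_neg, sub_eq_add_neg]
  have hsplit : #{l ∈ addresses b n | l ∉ D ∧ p l} + #{l ∈ addresses b n | l ∉ D ∧ ¬p l} +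
      #{x ∈ D | x.length = n} = b ^ n := by
    have hleaves : {x ∈ D | x.length = n} = {l ∈ addresses b n | l ∈ D} := by
      ext l; simp [mem_addresses, and_comm]
    rw [← filter_filter, ← filter_filter, card_filter_add_card_filter_not, hleaves, add_comm,
      card_filter_add_card_filter_not, card_addresses]
  have hpow : (1 : ℤ) ≤ b ^ (n - #D) := one_le_pow₀ (by omega)
  rw [hsign] at hgap
  rcases le_abs'.1 hgap with h | h <;> omega

end BranchingTree

def heapIndex : List (Fin 3) → ℕ
  | [] => 1
  | i :: l => 3 * heapIndex l + i - 1

lemma one_le_heapIndex (l : List (Fin 3)) : 1 ≤ heapIndex l := by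
  induction l with
  | nil => simp [heapIndex]
  | cons i l ih => simp only [heapIndex]; omega

lemma heapIndex_injective : Function.Injective heapIndex := by
  intro l₁
  induction l₁ with
  | nil =>
    rintro (_ | ⟨i, l⟩) h
    · rfl
    · have := one_le_heapIndex l
      simp only [heapIndex] at h
      omega
  | cons i l ih =>
    -- `heapIndex (i :: l) + 1 = 3 * heapIndex l + i` determines both `i` and `heapIndex l`.
    rintro (_ | ⟨i', l'⟩) h
    · have := one_le_heapIndex l
      simp only [heapIndex] at h
      omega
    · have := one_le_heapIndex l
      have := one_le_heapIndex l'
      have := i.isLt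
      have := i'.isLt
      simp only [heapIndex] at h
      obtain rfl : l = l' := ih (by omega)
      obtain rfl : i = i' := Fin.ext (by omega)
      rfl

lemma heapIndex_bounds (l : List (Fin 3)) :
    3 ^ l.length < 2 * heapIndex l ∧ 2 * heapIndex l < 3 ^ (l.length + 1) := by
  induction l with
  | nil => simp [heapIndex]
  | cons i l ih =>
    have := i.isLt
    simp only [heapIndex, List.length_cons, pow_succ] at ih ⊢
    omega

lemma heapIndex_le_of_length_lt {C : ℕ} {l : List (Fin 3)} (h : l.length < C) :
    heapIndex l ≤ (3 ^ C - 1) / 2 := by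
  have := (heapIndex_bounds l).2
  have := Nat.pow_le_pow_right (by norm_num : 0 < 3) (Nat.succ_le_of_lt h)
  omega

lemma heapIndex_bounds_of_length_eq {C : ℕ} {l : List (Fin 3)} (h : l.length = C) :
    (3 ^ C - 1) / 2 < heapIndex l ∧ heapIndex l ≤ (3 ^ C - 1) / 2 + 3 ^ C := by
  have := heapIndex_bounds l
  rw [h, pow_succ] at this
  omega

-- Meaningful at depth at most `C`; the reduction mod `3 ^ C` merely produces some value at
-- deeper addresses.
def ternaryNode (C : ℕ) (l : List (Fin 3)) : Fin ((3 ^ C - 1) / 2) ⊕ Fin (3 ^ C) :=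
  if h : heapIndex l ≤ (3 ^ C - 1) / 2 then
    .inl ⟨heapIndex l - 1, by have := one_le_heapIndex l; omega⟩
  else .inr ⟨(heapIndex l - (3 ^ C - 1) / 2 - 1) % 3 ^ C, Nat.mod_lt _ (by positivity)⟩

def nodeHeapIndex (C : ℕ) : Fin ((3 ^ C - 1) / 2) ⊕ Fin (3 ^ C) → ℕ :=
  Sum.elim (fun i => i + 1) (fun j => (3 ^ C - 1) / 2 + 1 + j)

lemma exists_ternaryNode_eq_inl {C : ℕ} {l : List (Fin 3)} (h : l.length < C) :
    ∃ i, ternaryNode C l = .inl i :=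
  ⟨_, dif_pos (heapIndex_le_of_length_lt h)⟩

lemma exists_ternaryNode_eq_inr {C : ℕ} {l : List (Fin 3)} (h : l.length = C) :
    ∃ j, ternaryNode C l = .inr j :=
  ⟨_, dif_neg (heapIndex_bounds_of_length_eq h).1.not_ge⟩

lemma nodeHeapIndex_ternaryNode {C : ℕ} {l : List (Fin 3)} (h : l.length ≤ C) :
    nodeHeapIndex C (ternaryNode C l) = heapIndex l := by
  have := one_le_heapIndex l
  rcases h.lt_or_eq with h | h
  · simp [ternaryNode, nodeHeapIndex, heapIndex_le_of_length_lt h]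
    omega
  · have := heapIndex_bounds_of_length_eq h
    simp only [ternaryNode, dif_neg this.1.not_ge, nodeHeapIndex, Sum.elim_inr,
      Nat.mod_eq_of_lt (show heapIndex l - (3 ^ C - 1) / 2 - 1 < 3 ^ C by omega)]
    omega

lemma ternaryNode_injOn (C : ℕ) : Set.InjOn (ternaryNode C) {l | l.length ≤ C} :=
  fun l hl l' hl' h =>
  heapIndex_injective (by rw [← nodeHeapIndex_ternaryNode hl, h, nodeHeapIndex_ternaryNode hl'])

section GluedTree

variable {C r : ℕ} {Ts : Fin (3 ^ C) → SimpleGraph (Fin r)} {roots : Fin (3 ^ C) → Fin r}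

def gluedVertex (roots : Fin (3 ^ C) → Fin r) (l : List (Fin 3)) :
    Fin ((3 ^ C - 1) / 2) ⊕ Fin (3 ^ C) × Fin r :=
  (ternaryNode C l).map id fun j => (j, roots j)

lemma gluedTernary_adj_gluedVertex_cons (i : Fin 3) {l : List (Fin 3)} (hl : l.length < C) :
    (gluedTernary C r Ts roots).Adj (gluedVertex roots (i :: l)) (gluedVertex roots l) := by
  have hil : (i :: l).length ≤ C := hl
  have hchild : ternaryChild (nodeHeapIndex C (ternaryNode C l))
      (nodeHeapIndex C (ternaryNode C (i :: l))) := by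
    have := one_le_heapIndex l
    rw [nodeHeapIndex_ternaryNode hl.le, nodeHeapIndex_ternaryNode hil]
    simp only [ternaryChild, heapIndex]
    omega
  have hne : ternaryNode C (i :: l) ≠ ternaryNode C l := fun h => by
    simpa using congrArg List.length (ternaryNode_injOn C hil hl.le h)
  obtain ⟨p, hp⟩ := exists_ternaryNode_eq_inl hl
  rw [gluedTernary, fromRel_adj]
  rcases hc : ternaryNode C (i :: l) with q | j <;>
    simp_all [gluedVertex, nodeHeapIndex]

lemma gluedTernary_adj_inr {j : Fin (3 ^ C)} {a a' : Fin r} (h : (Ts j).Adj a a') :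
    (gluedTernary C r Ts roots).Adj (.inr (j, a)) (.inr (j, a')) := by
  simp [gluedTernary, h, h.ne]

variable {V : Type*} (f : Fin ((3 ^ C - 1) / 2) ⊕ Fin (3 ^ C) × Fin r → V) (W : Set V)

-- `t.map id Prod.fst` is the node of the ternary skeleton whose piece contains `t`.
open Classical in
noncomputable def touchedAddresses : Finset (List (Fin 3)) :=
  {l ∈ (range (C + 1)).biUnion (addresses 3) | ∃ t, f t ∈ W ∧ t.map id Prod.fst = ternaryNode C l}

variable {f W}

lemma mem_touchedAddresses {l : List (Fin 3)} :
    l ∈ touchedAddresses f W ↔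
      l.length ≤ C ∧ ∃ t, f t ∈ W ∧ t.map id Prod.fst = ternaryNode C l := by
  simp [touchedAddresses, mem_addresses]

lemma card_touchedAddresses_le (hf : Function.Injective f) (hW : W.Finite) :
    #(touchedAddresses f W) ≤ W.ncard := by
  classical
  set S := ({t | f t ∈ W} : Finset _)
  calc #(touchedAddresses f W) ≤ #(S.image (Sum.map id Prod.fst)) := by
        refine card_le_card_of_injOn (ternaryNode C) (fun l hl => ?_)
          ((ternaryNode_injOn C).mono fun l hl => (mem_touchedAddresses.1 hl).1)
        obtain ⟨-, t, ht, hcell⟩ := mem_touchedAddresses.1 hl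
        exact mem_image.2 ⟨t, by simpa [S] using ht, hcell⟩
    _ ≤ #S := card_image_le
    _ = (f '' S).ncard := by rw [Set.ncard_image_of_injective _ hf, Set.ncard_coe_finset]
    _ ≤ W.ncard := Set.ncard_le_ncard (fun v ⟨t, ht, hv⟩ => hv ▸ (mem_filter.1 ht).2) hW

lemma gluedVertex_notMem {l : List (Fin 3)} (hl : l.length ≤ C) (h : l ∉ touchedAddresses f W) :
    f (gluedVertex roots l) ∉ W := fun hW =>
  h (mem_touchedAddresses.2 ⟨hl, _, hW, by simp only [gluedVertex]; cases ternaryNode C l <;> rfl⟩)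

lemma constantOnEdgesOff_touchedAddresses (X : Set V) [DecidablePred (· ∈ X)]
    (hX : ∀ ⦃t t'⦄, (gluedTernary C r Ts roots).Adj t t' → f t ∉ W → f t' ∉ W →
      (f t ∈ X ↔ f t' ∈ X)) :
    ConstantOnEdgesOff C (touchedAddresses f W)
      fun l => if f (gluedVertex roots l) ∈ X then 1 else -1 := by
  intro i l hl hlD hilD
  simp only [hX (gluedTernary_adj_gluedVertex_cons i hl)
    (gluedVertex_notMem (Nat.succ_le_of_lt hl) hilD) (gluedVertex_notMem hl.le hlD)]

lemma mul_card_filter_notMem_touchedAddresses_le (X : Set V) [DecidablePred (· ∈ X)]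
    (hX : ∀ ⦃t t'⦄, (gluedTernary C r Ts roots).Adj t t' → f t ∉ W → f t' ∉ W →
      (f t ∈ X ↔ f t' ∈ X))
    (hf : Function.Injective f) (hconn : ∀ j, (Ts j).Connected) (hXfin : X.Finite) :
    r * #{l ∈ addresses 3 C | l ∉ touchedAddresses f W ∧ f (gluedVertex roots l) ∈ X} ≤
      X.ncard := by
  set L := {l ∈ addresses 3 C | l ∉ touchedAddresses f W ∧ f (gluedVertex roots l) ∈ X}
  set P : Set (List (Fin 3) × Fin r) := ↑(L ×ˢ (univ : Finset (Fin r)))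
  have hmaps : ∀ p ∈ P,
      f ((ternaryNode C p.1).map id (·, p.2)) ∈ X := by
    rintro ⟨l, a⟩ hp
    simp only [P, coe_product, Set.mem_prod, mem_coe, L, mem_filter, mem_addresses] at hp
    obtain ⟨⟨hlC, hlD, hlX⟩, -⟩ := hp
    obtain ⟨j, hj⟩ := exists_ternaryNode_eq_inr hlC
    have huntouched : ∀ a, f (.inr (j, a)) ∉ W := fun a ha =>
      hlD (mem_touchedAddresses.2 ⟨hlC.le, .inr (j, a), ha, by simp [hj]⟩)
    have hroot : f (.inr (j, roots j)) ∈ X := by simpa [gluedVertex, hj] using hlX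
    simpa [hj] using (((hconn j).preconnected a (roots j)).iff_of_forall_adj
      (P := fun a => f (.inr (j, a)) ∈ X)
      fun a a' h => hX (gluedTernary_adj_inr h) (huntouched a) (huntouched a')).2 hroot
  calc r * #L = P.ncard := by
        rw [Set.ncard_coe_finset, card_product, card_univ, Fintype.card_fin, mul_comm]
    _ ≤ X.ncard := by
        refine Set.ncard_le_ncard_of_injOn _ hmaps ?_ hXfin
        rintro ⟨l, a⟩ hp ⟨l', a'⟩ hp' h
        simp only [P, coe_product, Set.mem_prod, mem_coe, L, mem_filter, mem_addresses] at hp hp'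
        obtain ⟨j, hj⟩ := exists_ternaryNode_eq_inr hp.1.1
        obtain ⟨j', hj'⟩ := exists_ternaryNode_eq_inr hp'.1.1
        simp only [hj, hj', Sum.map_inr, hf.eq_iff, Sum.inr.injEq, Prod.mk.injEq] at h
        obtain ⟨rfl, rfl⟩ := h
        rw [ternaryNode_injOn C hp.1.1.le hp'.1.1.le (hj.trans hj'.symm)]

end GluedTree

lemma mem_iff_mem_of_adj_of_notMem {V : Type*} {G : SimpleGraph V} {U₁ U₂ W : Set V}
    (h₁₂ : Disjoint U₁ U₂)
    (hadj : ∀ u v : V, G.Adj u v ↔ u ≠ v ∧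
      ((u ∈ U₁ ∧ v ∈ U₁) ∨ (u ∈ U₂ ∧ v ∈ U₂) ∨
        (u ∈ W ∧ (v ∈ U₁ ∨ v ∈ U₂)) ∨ (v ∈ W ∧ (u ∈ U₁ ∨ u ∈ U₂))))
    {u v : V} (huv : G.Adj u v) (hu : u ∉ W) (hv : v ∉ W) :
    (u ∈ U₁ ↔ v ∈ U₁) ∧ (u ∈ U₂ ↔ v ∈ U₂) := by
  rcases ((hadj u v).1 huv).2 with ⟨h₁, h₁'⟩ | ⟨h₂, h₂'⟩ | ⟨hW, -⟩ | ⟨hW, -⟩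
  · exact ⟨iff_of_true h₁ h₁', iff_of_false (Set.disjoint_left.1 h₁₂ h₁)
      (Set.disjoint_left.1 h₁₂ h₁')⟩
  · exact ⟨iff_of_false (Set.disjoint_right.1 h₁₂ h₂) (Set.disjoint_right.1 h₁₂ h₂'),
      iff_of_true h₂ h₂'⟩
  · exact absurd hW hu
  · exact absurd hW hv

theorem glued_ternary_embedding_lower_bound_general (C : ℕ) :
    ∃ r₀ : ℕ, ∀ r : ℕ, r₀ ≤ r →
      ∀ (Ts : Fin (3 ^ C) → SimpleGraph (Fin r)) (roots : Fin (3 ^ C) → Fin r),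
        (∀ j, (Ts j).IsTree) →
        ∀ (V : Type) [Finite V] (G : SimpleGraph V) (U₁ U₂ W : Set V),
          Disjoint U₁ U₂ → Disjoint U₁ W → Disjoint U₂ W →
          U₁ ∪ U₂ ∪ W = Set.univ →
          U₁.ncard = U₂.ncard → W.ncard = C →
          (∀ u v : V, G.Adj u v ↔ u ≠ v ∧
            ((u ∈ U₁ ∧ v ∈ U₁) ∨ (u ∈ U₂ ∧ v ∈ U₂) ∨
              (u ∈ W ∧ (v ∈ U₁ ∨ v ∈ U₂)) ∨ (v ∈ W ∧ (u ∈ U₁ ∨ u ∈ U₂)))) →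
          ContainsCopy G (gluedTernary C r Ts roots) →
          ((3 : ℝ) ^ C + 1) * (r : ℝ) / 2 ≤ (U₁.ncard : ℝ) := by
  classical
  refine ⟨0, fun r _ Ts roots hTs V _ G U₁ U₂ W h₁₂ _ _ hcover hcard hWC hadj ⟨f, hf, hhom⟩ => ?_⟩
  have hside : ∀ v ∉ W, v ∈ U₂ ↔ v ∉ U₁ := fun v hv => by
    have hmem : v ∈ U₁ ∪ U₂ ∪ W := hcover ▸ Set.mem_univ v
    have hmem' : v ∈ U₁ ∨ v ∈ U₂ := by simpa [hv] using hmem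
    exact ⟨fun h₂ h₁ => Set.disjoint_left.1 h₁₂ h₁ h₂, hmem'.resolve_left⟩
  have hsame {t t'} (h : (gluedTernary C r Ts roots).Adj t t') :=
    mem_iff_mem_of_adj_of_notMem h₁₂ hadj (hhom h)
  have hconn : ∀ j, (Ts j).Connected := fun j => (hTs j).connected
  have hU₁ := mul_card_filter_notMem_touchedAddresses_le U₁ (fun _ _ h ht ht' => (hsame h ht ht').1)
    hf hconn U₁.toFinite
  have hU₂ := mul_card_filter_notMem_touchedAddresses_le U₂ (fun _ _ h ht ht' => (hsame h ht ht').2)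
    hf hconn U₂.toFinite
  have hhalf := pow_add_one_le_two_mul_card_or (by norm_num) le_rfl (touchedAddresses f W)
    (fun l hl => (mem_touchedAddresses.1 hl).1) (hWC ▸ card_touchedAddresses_le hf W.toFinite :)
    _ (constantOnEdgesOff_touchedAddresses U₁ fun _ _ h ht ht' => (hsame h ht ht').1)
  have hkey : (3 ^ C + 1) * r ≤ 2 * U₁.ncard := by
    rcases hhalf with h | h
    · linarith [Nat.mul_le_mul_right r h]
    · rw [filter_congr fun l hl => and_congr_right fun hlD =>
        (hside _ (gluedVertex_notMem (mem_addresses.1 hl).le hlD)).symm] at h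
      rw [hcard]
      linarith [Nat.mul_le_mul_right r h]
  have := (Nat.cast_le (α := ℝ)).2 hkey
  push_cast at this
  linarith

theorem glued_ternary_embedding_lower_bound (C : ℕ) (hC : 1 ≤ C) :
    ∃ r₀ : ℕ, ∀ r : ℕ, r₀ ≤ r →
      ∀ (Ts : Fin (3 ^ C) → SimpleGraph (Fin r)) (roots : Fin (3 ^ C) → Fin r),
        (∀ j, (Ts j).IsTree) →
        ∀ (V : Type) [Finite V] (G : SimpleGraph V) (U₁ U₂ W : Set V),
          Disjoint U₁ U₂ → Disjoint U₁ W → Disjoint U₂ W →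
          U₁ ∪ U₂ ∪ W = Set.univ →
          U₁.ncard = U₂.ncard → W.ncard = C →
          (∀ u v : V, G.Adj u v ↔ u ≠ v ∧
            ((u ∈ U₁ ∧ v ∈ U₁) ∨ (u ∈ U₂ ∧ v ∈ U₂) ∨
              (u ∈ W ∧ (v ∈ U₁ ∨ v ∈ U₂)) ∨ (v ∈ W ∧ (u ∈ U₁ ∨ u ∈ U₂)))) →
          ContainsCopy G (gluedTernary C r Ts roots) →
          ((3 : ℝ) ^ C + 1) * (r : ℝ) / 2 ≤ (U₁.ncard : ℝ) :=
  glued_ternary_embedding_lower_bound_general C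
end
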